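/- arXiv:2410.12072 — 8 statements merged into one kernel-verified Lean document; each statement's English description precedes it below -/
import Mathlib

section
/- Let f ∈ L¹(ℝ) be such that the function x ↦ x·f(x) is also in L¹(ℝ). Suppose ∫ f(x) dx = 0, there exists w ∈ ℝ such that f(x) ≤ 0 for all x < w and f(x) ≥ 0 for all x > w, and |f(x)| ≤ M for all x, where M > 0. Then ∫ |f(x)| dx ≤ 2·√(M · ∫ x·f(x) dx). -/
open MeasureTheory

lemma tent_eq_indicator (w r : ℝ) :
    (fun x => max (r - |x - w|) 0)
      = Set.indicator (Set.Icc (w - r) (w + r)) (fun x => r - |x - w|) := by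
  funext x
  by_cases hx : x ∈ Set.Icc (w - r) (w + r)
  · rw [Set.indicator_of_mem hx]
    rcases Set.mem_Icc.mp hx with ⟨h1, h2⟩
    have : |x - w| ≤ r := abs_le.mpr ⟨by linarith, by linarith⟩
    exact max_eq_left (by linarith)
  · rw [Set.indicator_of_notMem hx]
    simp only [Set.mem_Icc, not_and_or, not_le] at hx
    have h1 := le_abs_self (x - w)
    have h2 := neg_abs_le (x - w)
    rcases hx with h | h
    · exact max_eq_right (by linarith)
    · exact max_eq_right (by linarith)

lemma tent_cont (w r : ℝ) : Continuous fun x : ℝ => r - |x - w| :=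
  continuous_const.sub ((continuous_id.sub continuous_const).abs)

lemma tent_integrable (w r : ℝ) : Integrable (fun x => max (r - |x - w|) 0) := by
  rw [tent_eq_indicator]
  exact (((tent_cont w r).continuousOn).integrableOn_compact isCompact_Icc).integrable_indicator
    measurableSet_Icc

lemma tent_integral (w r : ℝ) (hr : 0 ≤ r) :
    (∫ x, max (r - |x - w|) 0) = r ^ 2 := by
  have hle : w - r ≤ w + r := by linarith
  have key : (∫ x in (w - r)..(w + r), r - |x - w|) = r ^ 2 := by
    have hsplit := intervalIntegral.integral_add_adjacent_intervals
      (a := w - r) (b := w) (c := w + r)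
      ((tent_cont w r).intervalIntegrable (μ := volume) _ _) ((tent_cont w r).intervalIntegrable (μ := volume) _ _)
    rw [← hsplit]
    have h1 : (∫ x in (w - r)..w, r - |x - w|) = ∫ x in (w - r)..w, (r - w) + x := by
      apply intervalIntegral.integral_congr
      intro x hx
      rw [Set.uIcc_of_le (by linarith)] at hx
      rcases hx with ⟨hx1, hx2⟩
      simp only
      rw [abs_of_nonpos (show x - w ≤ 0 by linarith)]; ring
    have h2 : (∫ x in w..(w + r), r - |x - w|) = ∫ x in w..(w + r), (r + w) - x := by
      apply intervalIntegral.integral_congr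
      intro x hx
      rw [Set.uIcc_of_le (by linarith)] at hx
      rcases hx with ⟨hx1, hx2⟩
      simp only
      rw [abs_of_nonneg (show 0 ≤ x - w by linarith)]; ring
    rw [h1, h2]
    rw [intervalIntegral.integral_add (continuous_const.intervalIntegrable _ _)
      intervalIntegral.intervalIntegrable_id,
      intervalIntegral.integral_sub (continuous_const.intervalIntegrable _ _)
      intervalIntegral.intervalIntegrable_id,
      intervalIntegral.integral_const, intervalIntegral.integral_const,
      integral_id, integral_id]
    simp only [smul_eq_mul]
    ring
  rw [intervalIntegral.integral_of_le hle] at key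
  rw [tent_eq_indicator, integral_indicator measurableSet_Icc,
    integral_Icc_eq_integral_Ioc]
  exact key

theorem integral_abs_le_two_sqrt (f : ℝ → ℝ) (M : ℝ) (hM : 0 < M)
    (hf : Integrable f) (hxf : Integrable (fun x => x * f x))
    (hint : (∫ x, f x) = 0) (w : ℝ)
    (hneg : ∀ x, x < w → f x ≤ 0) (hpos : ∀ x, w < x → 0 ≤ f x)
    (hbound : ∀ x, |f x| ≤ M) :
    (∫ x, |f x|) ≤ 2 * Real.sqrt (M * ∫ x, x * f x) := by
  set I := ∫ x, |f x| with hIdef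
  have hI0 : 0 ≤ I := integral_nonneg fun x => abs_nonneg _
  set r := I / (2 * M) with hrdef
  have hr0 : 0 ≤ r := div_nonneg hI0 (by linarith)
  -- integrability facts
  have hfw : Integrable (fun x => (x - w) * f x) := by
    have h := hxf.sub (hf.const_mul w)
    refine h.congr ?_
    filter_upwards with x
    simp only [Pi.sub_apply]
    ring
  have habs : Integrable (fun x => |x - w| * |f x|) := by
    have h := hfw.abs
    refine h.congr ?_
    filter_upwards with x
    rw [abs_mul]
  -- J = ∫ x f = ∫ |x-w| |f|
  have hJeq : (∫ x, x * f x) = ∫ x, |x - w| * |f x| := by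
    have h1 : (∫ x, (x - w) * f x) = (∫ x, x * f x) - w * ∫ x, f x := by
      rw [← integral_const_mul, ← integral_sub hxf (hf.const_mul w)]
      congr 1; funext x; ring
    have h2 : (∫ x, (x - w) * f x) = ∫ x, |x - w| * |f x| := by
      congr 1; funext x
      rcases lt_trichotomy x w with h | h | h
      · have hfx := hneg x h
        rw [abs_of_nonpos (show x - w ≤ 0 by linarith), abs_of_nonpos hfx]
        ring
      · subst h; simp
      · have hfx := hpos x h
        rw [abs_of_nonneg (show (0:ℝ) ≤ x - w by linarith), abs_of_nonneg hfx]
    rw [hint, mul_zero, sub_zero] at h1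
    rw [← h1, h2]
  set J := ∫ x, x * f x with hJdef
  have hJ0 : 0 ≤ J := by
    rw [hJeq]
    exact integral_nonneg fun x => mul_nonneg (abs_nonneg _) (abs_nonneg _)
  -- key pointwise inequality
  have hpt : ∀ x, r * |f x| - M * max (r - |x - w|) 0 ≤ |x - w| * |f x| := by
    intro x
    rcases le_or_gt r (|x - w|) with h | h
    · have : M * max (r - |x - w|) 0 = 0 := by
        rw [max_eq_right (by linarith), mul_zero]
      rw [this, sub_zero]
      exact mul_le_mul_of_nonneg_right h (abs_nonneg _)
    · have hmax : max (r - |x - w|) 0 = r - |x - w| := max_eq_left (by linarith)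
      rw [hmax]
      have h1 : (r - |x - w|) * |f x| ≤ (r - |x - w|) * M :=
        mul_le_mul_of_nonneg_left (hbound x) (by linarith)
      nlinarith [abs_nonneg (x - w), abs_nonneg (f x)]
  -- integrate
  have hkey : r * I - M * r ^ 2 ≤ J := by
    rw [hJeq]
    have hint1 : Integrable (fun x => r * |f x| - M * max (r - |x - w|) 0) :=
      (hf.abs.const_mul r).sub ((tent_integrable w r).const_mul M)
    have := integral_mono hint1 habs hpt
    rwa [integral_sub (hf.abs.const_mul r) ((tent_integrable w r).const_mul M),
      integral_const_mul, integral_const_mul, tent_integral w r hr0] at this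
  -- algebra: I^2/4 ≤ M * J
  have hsq : (I / 2) ^ 2 ≤ M * J := by
    have h1 : M * (r * I - M * r ^ 2) = (I / 2) ^ 2 := by
      rw [hrdef]
      field_simp
      ring
    calc (I / 2) ^ 2 = M * (r * I - M * r ^ 2) := h1.symm
      _ ≤ M * J := mul_le_mul_of_nonneg_left hkey hM.le
  calc I = 2 * (I / 2) := by ring
    _ ≤ 2 * Real.sqrt (M * J) := by
        have := Real.sqrt_le_sqrt hsq
        rw [Real.sqrt_sq (by linarith : 0 ≤ I / 2)] at this
        linarith
end

section
/- Let M > 0 and let ψ ∈ L¹([0,+∞)) satisfy 0 ≤ ψ(x) ≤ M for all x ≥ 0 and x ↦ x·ψ(x) ∈ L¹([0,+∞)). Setting I = ∫₀^∞ ψ(x) dx, one has ∫₀^∞ x·ψ(x) dx ≥ I²/(2M). -/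
open MeasureTheory Set

/-!
For `0 ≤ y ≤ M` and any `a`, one has `x * y ≥ a * y - M * (a - x)⁺`. Integrating over `[0, ∞)`
gives `∫ x ψ ≥ a I - M a² / 2` for every `a ≥ 0`, and the choice `a = I / M` yields `I² / (2M)`.
-/

lemma mul_sub_mul_max_sub_le {a x y M : ℝ} (hy : 0 ≤ y) (hyM : y ≤ M) :
    a * y - M * max (a - x) 0 ≤ x * y := by
  rcases le_total x a with hxa | hax
  · rw [max_eq_left (sub_nonneg.mpr hxa)]
    nlinarith [mul_nonneg (sub_nonneg.mpr hxa) (sub_nonneg.mpr hyM)]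
  · rw [max_eq_right (sub_nonpos.mpr hax)]
    nlinarith [mul_nonneg (sub_nonneg.mpr hax) hy]

lemma max_sub_eq_zero_of_mem_Ici_diff_Icc {a b x : ℝ} (hx : x ∈ Ici b \ Icc b a) :
    max (a - x) 0 = 0 := by
  have hax : a < x := by simp_all
  exact max_eq_right (by linarith)

lemma integrableOn_Ici_max_sub (a b : ℝ) : IntegrableOn (fun x => max (a - x) 0) (Ici b) :=
  ((continuous_const.sub continuous_id).max continuous_const).continuousOn.integrableOn_Icc
    |>.of_forall_sdiff_eq_zero measurableSet_Ici fun _ hx => max_sub_eq_zero_of_mem_Ici_diff_Icc hx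

lemma integral_Ici_max_sub {a b : ℝ} (hba : b ≤ a) :
    ∫ x in Ici b, max (a - x) 0 = (a - b) ^ 2 / 2 := by
  rw [setIntegral_eq_of_subset_of_forall_sdiff_eq_zero measurableSet_Ici Icc_subset_Ici_self
      fun _ hx => max_sub_eq_zero_of_mem_Ici_diff_Icc hx,
    integral_Icc_eq_integral_Ioc, ← intervalIntegral.integral_of_le hba,
    intervalIntegral.integral_congr (g := fun x => a - x) fun x hx => by
      rw [uIcc_of_le hba] at hx
      exact max_eq_left (sub_nonneg.mpr hx.2),
    intervalIntegral.integral_sub intervalIntegrable_const intervalIntegral.intervalIntegrable_id]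
  simp only [intervalIntegral.integral_const, integral_id, smul_eq_mul]
  ring

lemma mul_integral_sub_le_integral_mul {ψ : ℝ → ℝ} {M a : ℝ} (ha : 0 ≤ a)
    (hψ : IntegrableOn ψ (Ici 0)) (hxψ : IntegrableOn (fun x => x * ψ x) (Ici 0))
    (hbound : ∀ x, 0 ≤ x → 0 ≤ ψ x ∧ ψ x ≤ M) :
    a * (∫ x in Ici (0:ℝ), ψ x) - M * (a ^ 2 / 2) ≤ ∫ x in Ici (0:ℝ), x * ψ x := by
  have hmax := (integrableOn_Ici_max_sub a 0).const_mul M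
  calc a * (∫ x in Ici (0:ℝ), ψ x) - M * (a ^ 2 / 2)
      = ∫ x in Ici (0:ℝ), (a * ψ x - M * max (a - x) 0) := by
        rw [integral_sub (hψ.const_mul a) hmax, integral_const_mul, integral_const_mul,
          integral_Ici_max_sub ha, sub_zero]
    _ ≤ ∫ x in Ici (0:ℝ), x * ψ x :=
        setIntegral_mono_on ((hψ.const_mul a).sub hmax) hxψ measurableSet_Ici fun x hx =>
          mul_sub_mul_max_sub_le (hbound x hx).1 (hbound x hx).2

theorem integral_x_mul_ge_sq_div (M : ℝ) (hM : 0 < M) (ψ : ℝ → ℝ)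
    (hψ : IntegrableOn ψ (Ici 0))
    (hxψ : IntegrableOn (fun x => x * ψ x) (Ici 0))
    (hbound : ∀ x, 0 ≤ x → 0 ≤ ψ x ∧ ψ x ≤ M)
    (I : ℝ) (hI : I = ∫ x in Ici (0:ℝ), ψ x) :
    I ^ 2 / (2 * M) ≤ ∫ x in Ici (0:ℝ), x * ψ x := by
  have hI0 : 0 ≤ I := hI ▸ setIntegral_nonneg measurableSet_Ici fun x hx => (hbound x hx).1
  have hlower := mul_integral_sub_le_integral_mul (div_nonneg hI0 hM.le) hψ hxψ hbound
  rw [← hI] at hlower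
  convert hlower using 1
  field_simp
  ring
end

section
/- Under hypotheses (H1)–(H4), the following inequalities hold: b − a ≤ n, and −n < a < −1/3 < 1/3 < b < n. -/
/-!
Write `f x = |K_x|`. Then `0 ≤ f ≤ 1`, `f` vanishes off `[a, b]`, `∫ f = |K| = 1` and
`∫ x f(x) dx` is the first coordinate of the centroid, i.e. `0`. By the bathtub principle the mean
of such a density is at most `b - 1/2` and at least `a + 1/2`, so `a ≤ -1/2` and `b ≥ 1/2`.
If `|K_{x₀}| = 1` and `(c, z) ∈ K`, convexity places a copy of `K_{x₀}` scaled by `1 - t` inside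
the slice at `x₀ + t (c - x₀)`, so `f` dominates the tent `(1 - t)^(n-1)` over `[a, x₀]` and
`[x₀, b]`; the tent has integral `(b - a) / n`, whence `b - a ≤ n`. The remaining bounds
follow from `b - a ≤ n`, `a ≤ -1/2` and `b ≥ 1/2`.
-/

open MeasureTheory Set Module Pointwise

theorem integral_mul_le_sub_half {f : ℝ → ℝ} {b : ℝ} (hf : Integrable f)
    (hxf : Integrable fun x ↦ x * f x) (hf0 : ∀ x, 0 ≤ f x) (hf1 : ∀ x, f x ≤ 1)
    (hb : ∀ x, b < x → f x = 0) (hmass : ∫ x, f x = 1) :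
    ∫ x, x * f x ≤ b - 1 / 2 := by
  set g : ℝ → ℝ := (Icc (b - 1) b).indicator 1
  have hg : Integrable g := (integrable_indicator_iff measurableSet_Icc).2 (integrableOn_const
    (by simp [Real.volume_Icc]))
  have hxg_eq : (fun x ↦ x * g x) = (Icc (b - 1) b).indicator fun x ↦ x := by
    ext x
    by_cases hx : x ∈ Icc (b - 1) b <;> simp [g, hx]
  have hxg : Integrable fun x ↦ x * g x := by
    rw [hxg_eq]
    exact (integrable_indicator_iff measurableSet_Icc).2 (continuousOn_id.integrableOn_Icc)
  have hgmass : ∫ x, g x = 1 := by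
    simp [g, integral_indicator_one measurableSet_Icc, Real.volume_real_Icc]
  have hgmean : ∫ x, x * g x = b - 1 / 2 := by
    rw [hxg_eq, integral_indicator measurableSet_Icc, integral_Icc_eq_integral_Ioc,
      ← intervalIntegral.integral_of_le (by linarith), integral_id]
    ring
  -- compare `f` with the extremal density `g`: `f - g` is `≥ 0` left of `b - 1`, `≤ 0` right of it
  have hpos : ∀ x, 0 ≤ (b - 1 - x) * (f x - g x) := by
    intro x
    by_cases hx₁ : x < b - 1
    · have : g x = 0 := indicator_of_notMem (fun h ↦ by linarith [h.1]) _
      nlinarith [hf0 x]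
    by_cases hx₂ : x ≤ b
    · have : g x = 1 := indicator_of_mem (show x ∈ Icc (b - 1) b from ⟨not_lt.1 hx₁, hx₂⟩) _
      nlinarith [hf1 x]
    · have : g x = 0 := indicator_of_notMem (fun h ↦ hx₂ h.2) _
      simp [hb x (not_le.1 hx₂), this]
  have hexpand : (fun x ↦ (b - 1 - x) * (f x - g x))
      = fun x ↦ (b - 1) * (f x - g x) - (x * f x - x * g x) := by
    ext x
    ring
  have hnonneg : 0 ≤ ∫ x, (b - 1 - x) * (f x - g x) := integral_nonneg hpos
  have hfg : Integrable fun x ↦ (b - 1) * (f x - g x) := (hf.sub hg).const_mul _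
  have hxfg : Integrable fun x ↦ x * f x - x * g x := hxf.sub hxg
  rw [hexpand, integral_sub hfg hxfg, integral_const_mul, integral_sub hf hg,
    integral_sub hxf hxg, hmass, hgmass, hgmean] at hnonneg
  linarith

theorem add_half_le_integral_mul {f : ℝ → ℝ} {a : ℝ} (hf : Integrable f)
    (hxf : Integrable fun x ↦ x * f x) (hf0 : ∀ x, 0 ≤ f x) (hf1 : ∀ x, f x ≤ 1)
    (ha : ∀ x, x < a → f x = 0) (hmass : ∫ x, f x = 1) :
    a + 1 / 2 ≤ ∫ x, x * f x := by
  have hreflect : ∫ x, x * f (-x) = -∫ x, x * f x := by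
    rw [← integral_neg_eq_self (fun x ↦ x * f x), ← integral_neg]
    simp
  have := integral_mul_le_sub_half (b := -a) hf.comp_neg
    (by simpa using hxf.comp_neg.neg) (fun x ↦ hf0 (-x)) (fun x ↦ hf1 (-x))
    (fun x hx ↦ ha (-x) (by linarith)) (by rwa [integral_neg_eq_self f])
  linarith

theorem Measurable.intervalIntegrable_of_abs_le {f : ℝ → ℝ} {C : ℝ} (hfm : Measurable f)
    (hf : ∀ x, |f x| ≤ C) (u v : ℝ) : IntervalIntegrable f volume u v :=
  (intervalIntegrable_const (c := C)).mono_fun' hfm.aestronglyMeasurable (ae_of_all _ hf)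

theorem intervalIntegral_eq_sub_mul_integral_zero_one (f : ℝ → ℝ) (u v : ℝ) :
    ∫ x in u..v, f x = (v - u) * ∫ t in (0 : ℝ)..1, f (u + (v - u) * t) := by
  simp only [intervalIntegral.mul_integral_comp_add_mul, mul_zero, add_zero, mul_one,
    add_sub_cancel]

theorem one_div_succ_le_integral_of_pow_le {g : ℝ → ℝ} {m : ℕ}
    (hg : IntervalIntegrable g volume 0 1) (h : ∀ t ∈ Icc (0 : ℝ) 1, (1 - t) ^ m ≤ g t) :
    1 / (m + 1) ≤ ∫ t in (0 : ℝ)..1, g t := by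
  have hpow : ∫ t in (0 : ℝ)..1, (1 - t) ^ m = 1 / (m + 1) := by
    rw [intervalIntegral.integral_comp_sub_left (fun t ↦ t ^ m), integral_pow]
    norm_num
  rw [← hpow]
  have hcont : Continuous fun t : ℝ ↦ (1 - t) ^ m := by fun_prop
  exact intervalIntegral.integral_mono_on zero_le_one (hcont.intervalIntegrable 0 1) hg h

theorem sub_le_succ_of_pow_le {f : ℝ → ℝ} {m : ℕ} {a b x₀ C : ℝ} (hfm : Measurable f)
    (hf : ∀ x, |f x| ≤ C) (hmass : ∫ x in a..b, f x ≤ 1) (hx₀ : x₀ ∈ Icc a b)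
    (hcone : ∀ c ∈ ({a, b} : Set ℝ), ∀ t ∈ Icc (0 : ℝ) 1, (1 - t) ^ m ≤ f (x₀ + (c - x₀) * t)) :
    b - a ≤ m + 1 := by
  have hcone_int : ∀ c ∈ ({a, b} : Set ℝ),
      1 / (m + 1) ≤ ∫ t in (0 : ℝ)..1, f (x₀ + (c - x₀) * t) := fun c hc ↦
    one_div_succ_le_integral_of_pow_le
      ((hfm.comp (by fun_prop)).intervalIntegrable_of_abs_le (fun _ ↦ hf _) 0 1) (hcone c hc)
  have hsplit : ∫ x in a..b, f x = (x₀ - a) * (∫ t in (0 : ℝ)..1, f (x₀ + (a - x₀) * t))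
      + (b - x₀) * ∫ t in (0 : ℝ)..1, f (x₀ + (b - x₀) * t) := by
    rw [← intervalIntegral.integral_add_adjacent_intervals
      (hfm.intervalIntegrable_of_abs_le hf a x₀) (hfm.intervalIntegrable_of_abs_le hf x₀ b),
      intervalIntegral.integral_symm,
      intervalIntegral_eq_sub_mul_integral_zero_one f x₀ a,
      intervalIntegral_eq_sub_mul_integral_zero_one f x₀ b]
    ring
  have ha := mul_le_mul_of_nonneg_left (hcone_int a (by simp)) (sub_nonneg.2 hx₀.1)
  have hb := mul_le_mul_of_nonneg_left (hcone_int b (by simp)) (sub_nonneg.2 hx₀.2)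
  rw [← div_le_one (by positivity)]
  calc (b - a) / (m + 1) = (x₀ - a) * (1 / (m + 1)) + (b - x₀) * (1 / (m + 1)) := by ring
    _ ≤ ∫ x in a..b, f x := by linarith
    _ ≤ 1 := hmass

theorem le_neg_half_and_half_le {f : ℝ → ℝ} {a b : ℝ} (hfm : Measurable f)
    (hf0 : ∀ x, 0 ≤ f x) (hf1 : ∀ x, f x ≤ 1) (hsupp : ∀ x ∉ Icc a b, f x = 0)
    (hmass : ∫ x, f x = 1) (hmean : ∫ x, x * f x = 0) : a ≤ -1 / 2 ∧ 1 / 2 ≤ b := by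
  have hfab : IntegrableOn f (Icc a b) :=
    Measure.integrableOn_of_bounded (by simp [Real.volume_Icc]) hfm.aestronglyMeasurable
      (M := 1) (ae_of_all _ fun x ↦ by rw [Real.norm_eq_abs, abs_of_nonneg (hf0 x)]; exact hf1 x)
  have hf : Integrable f := hfab.integrable_of_forall_notMem_eq_zero hsupp
  have hxf : Integrable fun x ↦ x * f x :=
    (hfab.continuousOn_mul continuousOn_id isCompact_Icc).integrable_of_forall_notMem_eq_zero
      fun x hx ↦ by simp [hsupp x hx]
  constructor
  · linarith [add_half_le_integral_mul (a := a) hf hxf hf0 hf1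
      (fun x hx ↦ hsupp x fun h ↦ by linarith [h.1]) hmass]
  · linarith [integral_mul_le_sub_half (b := b) hf hxf hf0 hf1
      (fun x hx ↦ hsupp x fun h ↦ by linarith [h.2]) hmass]

theorem sub_le_succ_and_le_neg_half_and_half_le {f : ℝ → ℝ} {m : ℕ} {a b x₀ : ℝ}
    (hfm : Measurable f) (hf0 : ∀ x, 0 ≤ f x) (hf1 : ∀ x, f x ≤ 1)
    (hsupp : ∀ x ∉ Icc a b, f x = 0) (hmass : ∫ x, f x = 1) (hmean : ∫ x, x * f x = 0)
    (hcone : ∀ c ∈ ({a, b} : Set ℝ), ∀ t ∈ Icc (0 : ℝ) 1, (1 - t) ^ m ≤ f (x₀ + (c - x₀) * t)) :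
    b - a ≤ m + 1 ∧ a ≤ -1 / 2 ∧ 1 / 2 ≤ b := by
  have hx₀ : x₀ ∈ Icc a b := by
    by_contra hx
    have := hcone a (by simp) 0 (left_mem_Icc.2 zero_le_one)
    norm_num [hsupp x₀ hx] at this
  have hmass_ab : ∫ x in a..b, f x ≤ 1 := by
    rw [intervalIntegral.integral_of_le (hx₀.1.trans hx₀.2), ← hmass]
    exact setIntegral_le_integral (.of_integral_ne_zero (by simp [hmass])) (ae_of_all _ hf0)
  exact ⟨sub_le_succ_of_pow_le hfm (fun x ↦ abs_le.2 ⟨by linarith [hf0 x], hf1 x⟩) hmass_ab hx₀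
    hcone, le_neg_half_and_half_le hfm hf0 hf1 hsupp hmass hmean⟩

theorem setIntegral_comp_fst {α β F : Type*} [MeasurableSpace α] [MeasurableSpace β]
    [NormedAddCommGroup F] [NormedSpace ℝ F] [CompleteSpace F] {μ : Measure α} {ν : Measure β}
    [SFinite μ] [SFinite ν] {K : Set (α × β)} (hK : MeasurableSet K) {g : α → F}
    (hg : IntegrableOn (fun p ↦ g p.1) K (μ.prod ν)) :
    ∫ p in K, g p.1 ∂μ.prod ν = ∫ x, ν.real (Prod.mk x ⁻¹' K) • g x ∂μ := by
  rw [← integral_indicator (f := fun p ↦ g p.1) hK,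
    integral_prod _ ((integrable_indicator_iff hK).2 hg)]
  congr 1 with x
  simp_rw [← indicator_comp_right (Prod.mk x)]
  exact integral_indicator_const (g x) (measurable_prodMk_left hK)

theorem Convex.pow_mul_measureReal_slice_le {E : Type*} [NormedAddCommGroup E] [NormedSpace ℝ E]
    [MeasurableSpace E] [BorelSpace E] [FiniteDimensional ℝ E] (μ : Measure E)
    [μ.IsAddHaarMeasure] {K : Set (ℝ × E)} (hK : Convex ℝ K) {x₀ c : ℝ} (hc : c ∈ Prod.fst '' K)
    {t : ℝ} (ht : t ∈ Icc (0 : ℝ) 1) (hfin : μ (Prod.mk (x₀ + (c - x₀) * t) ⁻¹' K) ≠ ⊤) :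
    (1 - t) ^ finrank ℝ E * μ.real (Prod.mk x₀ ⁻¹' K)
      ≤ μ.real (Prod.mk (x₀ + (c - x₀) * t) ⁻¹' K) := by
  obtain ⟨⟨c, z⟩, hcz, rfl⟩ := hc
  have h1t : 0 ≤ 1 - t := by linarith [ht.2]
  have hsub : (t • z) +ᵥ (1 - t) • Prod.mk x₀ ⁻¹' K ⊆ Prod.mk (x₀ + (c - x₀) * t) ⁻¹' K := by
    rintro _ ⟨_, ⟨y, hy, rfl⟩, rfl⟩
    have := hK hy hcz h1t ht.1 (by ring)
    show (x₀ + (c - x₀) * t, t • z + (1 - t) • y) ∈ K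
    convert this using 1
    simp only [Prod.smul_mk, Prod.mk_add_mk, smul_eq_mul, Prod.mk.injEq]
    exact ⟨by ring, add_comm _ _⟩
  have hvol := measure_mono (μ := μ) hsub
  rw [measure_vadd, Measure.addHaar_smul, abs_of_nonneg (pow_nonneg h1t _)] at hvol
  rw [measureReal_def, measureReal_def, ← ENNReal.toReal_ofReal (pow_nonneg h1t _),
    ← ENNReal.toReal_mul]
  exact ENNReal.toReal_mono hfin hvol

section Slices

variable {E : Type*} [MeasureSpace E] {K : Set (ℝ × E)}

theorem measureReal_slice_eq_zero {x : ℝ} (hx : x ∉ Prod.fst '' K) :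
    volume.real (Prod.mk x ⁻¹' K) = 0 := by
  have hempty : Prod.mk x ⁻¹' K = ∅ :=
    eq_empty_of_forall_notMem fun y hy ↦ hx ⟨(x, y), hy, rfl⟩
  rw [hempty, measureReal_empty]

variable [SFinite (volume : Measure E)]

theorem integral_measureReal_slice (hK : MeasurableSet K) (hfin : volume K ≠ ⊤) :
    ∫ x, volume.real (Prod.mk x ⁻¹' K) = volume.real K := by
  have := setIntegral_comp_fst (μ := volume) (ν := volume) hK (g := fun _ ↦ (1 : ℝ))
    (integrableOn_const hfin)
  rw [setIntegral_const, ← Measure.volume_eq_prod] at this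
  simpa using this.symm

theorem integral_mul_measureReal_slice (hK : MeasurableSet K)
    (hfst : IntegrableOn Prod.fst K) :
    ∫ x, x * volume.real (Prod.mk x ⁻¹' K) = ∫ p in K, p.1 := by
  have := setIntegral_comp_fst (μ := volume) (ν := volume) (g := id) hK hfst
  rw [← Measure.volume_eq_prod] at this
  simpa [mul_comm] using this.symm

end Slices

theorem bounds_on_a_b (n : ℕ) (hn : 2 ≤ n)
    (K : Set (ℝ × EuclideanSpace ℝ (Fin (n - 1))))
    (hKcomp : IsCompact K) (hKconv : Convex ℝ K)
    -- (H1): the centroid of K is the origin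
    (hH1 : (∫ p in K, p) = 0)
    -- (H3): max_x |K_x| = 1
    (hH3le : ∀ x : ℝ, volume {y : EuclideanSpace ℝ (Fin (n - 1)) | (x, y) ∈ K} ≤ 1)
    (hH3eq : ∃ x : ℝ, volume {y : EuclideanSpace ℝ (Fin (n - 1)) | (x, y) ∈ K} = 1)
    -- (H4): |K| = 1
    (hH4 : volume K = 1)
    (a b : ℝ)
    (ha : IsLeast (Prod.fst '' K) a) (hb : IsGreatest (Prod.fst '' K) b) :
    b - a ≤ n ∧ -(n:ℝ) < a ∧ a < -(1/3) ∧ (1/3:ℝ) < b ∧ b < n := by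
  have hKm : MeasurableSet K := hKcomp.measurableSet
  set f : ℝ → ℝ := fun x ↦ volume.real (Prod.mk x ⁻¹' K)
  have hf1 : ∀ x, f x ≤ 1 := fun x ↦
    ENNReal.toReal_le_of_le_ofReal zero_le_one (by rw [ENNReal.ofReal_one]; exact hH3le x)
  have hsupp : ∀ x ∉ Icc a b, f x = 0 := fun x hx ↦
    measureReal_slice_eq_zero fun hxK ↦ hx ⟨ha.2 hxK, hb.2 hxK⟩
  have hmass : ∫ x, f x = 1 := by
    rw [integral_measureReal_slice hKm (by simp [hH4]), measureReal_def, hH4, ENNReal.toReal_one]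
  have hmean : ∫ x, x * f x = 0 := by
    rw [integral_mul_measureReal_slice hKm (continuousOn_fst.integrableOn_compact hKcomp),
      ← fst_integral (f := fun p ↦ p) (continuousOn_id.integrableOn_compact hKcomp), hH1,
      Prod.fst_zero]
  obtain ⟨x₀, hx₀⟩ := hH3eq
  have hcone : ∀ c ∈ ({a, b} : Set ℝ), ∀ t ∈ Icc (0 : ℝ) 1,
      (1 - t) ^ (n - 1) ≤ f (x₀ + (c - x₀) * t) := by
    rintro c hc t ht
    have hcK : c ∈ Prod.fst '' K := by rcases hc with rfl | rfl; exacts [ha.1, hb.1]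
    have := hKconv.pow_mul_measureReal_slice_le volume (x₀ := x₀) hcK ht
      ((hH3le _).trans_lt ENNReal.one_lt_top).ne
    rwa [show volume.real (Prod.mk x₀ ⁻¹' K) = 1 from (congrArg ENNReal.toReal hx₀).trans
      ENNReal.toReal_one, finrank_euclideanSpace_fin, mul_one] at this
  obtain ⟨hlen, hahalf, hbhalf⟩ := sub_le_succ_and_le_neg_half_and_half_le
    (measurable_measure_prodMk_left hKm).ennreal_toReal (fun _ ↦ measureReal_nonneg) hf1 hsupp
    hmass hmean hcone
  rw [Nat.cast_sub (by omega), Nat.cast_one, sub_add_cancel] at hlen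
  exact ⟨hlen, by linarith, by linarith, by linarith, by linarith⟩
end

section
/- Under hypotheses (H1)–(H4), the function c satisfies: (1) a' < 0; (2) c(0) = g(0); (3) ∫_{a'}^{0} c(x)^{n−1} dx = |K ∩ H⁻|; (4) ∫_{0}^{b'} c(x)^{n−1} dx = |K ∩ H⁺|; (5) ∫_{a'}^{b'} c(x)^{n−1} dx = 1. -/
/-!
The hyperplane `H` is null, so `|K ∩ H⁺| + |K ∩ H⁻| = |K| = 1`, and since the centroid lies on `H`
neither half of `K` is null. Hence `K` has slices of positive measure on both sides of `H`; by
convexity the slice `K₀` contains a homothetic copy of one of them, so `0 < |K₀| ≤ 1`.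
The rest is a computation with the cone profile `c`: `∫_u^{b'} c^{n-1} = |K₀| (b' - u)^n / (n b'^{n-1})`,
and `b'`, `a'` are chosen so that this equals `|K ∩ H⁺|` at `u = 0` and `1` at `u = a'`;
finally `a' < 0` because `|K ∩ H⁺| < 1`.
-/

open MeasureTheory Set

theorem measure_setOf_nonpos_ne_zero_of_integral_eq_zero {α : Type*} [MeasurableSpace α]
    {μ : Measure α} {f : α → ℝ} (hf : Integrable f μ) (h₀ : ∫ x, f x ∂μ = 0) (hμ : μ ≠ 0) :
    μ {x | f x ≤ 0} ≠ 0 := by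
  intro h
  have hpos : ∀ᵐ x ∂μ, 0 < f x := by simpa only [ae_iff, not_lt] using h
  have hzero : f =ᵐ[μ] 0 :=
    (integral_eq_zero_iff_of_nonneg_ae (hpos.mono fun _ => le_of_lt) hf).1 h₀
  have hfalse : ∀ᵐ x ∂μ, False := by
    filter_upwards [hpos, hzero] with x hx hx' using hx.ne' hx'
  exact hμ (ae_eq_bot.1 (Filter.eventually_false_iff_eq_bot.1 hfalse))

section Slices

variable {E : Type*} [MeasureSpace E] [SFinite (volume : Measure E)]

theorem volume_preimage_fst_singleton (t : ℝ) : volume (Prod.fst ⁻¹' {t} : Set (ℝ × E)) = 0 := by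
  rw [← prod_univ, Measure.volume_eq_prod, Measure.prod_prod, Real.volume_singleton, zero_mul]

theorem volume_inter_fst_nonneg_add_nonpos {K : Set (ℝ × E)} (hK : MeasurableSet K) :
    volume (K ∩ {p | 0 ≤ p.1}) + volume (K ∩ {p | p.1 ≤ 0}) = volume K := by
  have hunion : K ∩ {p | 0 ≤ p.1} ∪ K ∩ {p | p.1 ≤ 0} = K := by
    rw [← inter_union_distrib_left]
    ext p
    simp [le_total]
  have hinter : volume (K ∩ {p | 0 ≤ p.1} ∩ (K ∩ {p | p.1 ≤ 0})) = 0 :=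
    measure_mono_null (fun p hp => le_antisymm hp.2.2 hp.1.2) (volume_preimage_fst_singleton 0)
  rw [← measure_union_add_inter _ (hK.inter (measurableSet_le measurable_fst measurable_const)),
    hunion, hinter, add_zero]

theorem exists_mem_volume_slice_ne_zero {K : Set (ℝ × E)} (hK : MeasurableSet K) {S : Set ℝ}
    (hS : MeasurableSet S) (h : volume (K ∩ Prod.fst ⁻¹' S) ≠ 0) :
    ∃ x ∈ S, volume (Prod.mk x ⁻¹' K) ≠ 0 := by
  contrapose! h
  rw [Measure.volume_eq_prod, Measure.measure_prod_null (hK.inter (measurable_fst hS))]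
  refine Filter.Eventually.of_forall fun x => ?_
  by_cases hx : x ∈ S
  · exact measure_mono_null (fun y hy => hy.1) (h x hx)
  · exact measure_mono_null (fun y hy => absurd hy.2 hx) measure_empty

end Slices

section ConvexBody

variable {E : Type*} [NormedAddCommGroup E] [NormedSpace ℝ E] {K : Set (ℝ × E)}

theorem image_homothety_slice_subset (hK : Convex ℝ K) {x₁ x₂ r : ℝ} {y₁ : E}
    (hy₁ : (x₁, y₁) ∈ K) (hr₀ : 0 ≤ r) (hr₁ : r ≤ 1) :
    AffineMap.homothety y₁ r '' (Prod.mk x₂ ⁻¹' K) ⊆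
      Prod.mk (AffineMap.lineMap x₁ x₂ r) ⁻¹' K := by
  rintro _ ⟨y, hy, rfl⟩
  rw [mem_preimage]
  convert hK hy₁ hy (sub_nonneg.2 hr₁) hr₀ (sub_add_cancel 1 r) using 1
  rw [AffineMap.lineMap_apply_module, AffineMap.homothety_apply, vsub_eq_sub, vadd_eq_add]
  ext
  · simp only [Prod.fst_add, Prod.smul_fst]
  · simp only [Prod.snd_add, Prod.smul_snd]
    module

variable [FiniteDimensional ℝ E] [MeasureSpace E] [BorelSpace E]
  [(volume : Measure E).IsAddHaarMeasure]

theorem volume_inter_fst_nonpos_ne_zero_and_nonneg (hK : IsCompact K) (hK₀ : volume K ≠ 0)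
    (hcentroid : ∫ p in K, p = 0) :
    volume (K ∩ {p | p.1 ≤ 0}) ≠ 0 ∧ volume (K ∩ {p | 0 ≤ p.1}) ≠ 0 := by
  have hfst : IntegrableOn Prod.fst K := continuous_fst.continuousOn.integrableOn_compact hK
  have hfst₀ : ∫ p in K, p.1 = 0 := by
    rw [← fst_integral (continuous_id'.continuousOn.integrableOn_compact hK), hcentroid,
      Prod.fst_zero]
  have hμ : volume.restrict K ≠ 0 := Measure.restrict_eq_zero.not.2 hK₀
  constructor
  · have := measure_setOf_nonpos_ne_zero_of_integral_eq_zero hfst hfst₀ hμ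
    rwa [Measure.restrict_apply (measurableSet_le measurable_fst measurable_const),
      inter_comm] at this
  · have := measure_setOf_nonpos_ne_zero_of_integral_eq_zero hfst.neg
      (by simp only [Pi.neg_apply, integral_neg, hfst₀, neg_zero]) hμ
    simp only [Pi.neg_apply, neg_nonpos] at this
    rwa [Measure.restrict_apply (measurableSet_le measurable_const measurable_fst),
      inter_comm] at this

theorem volume_slice_ne_zero_of_convex (hK : Convex ℝ K) {x₁ x₂ t : ℝ} (h₁ : x₁ ≤ t)
    (h₂ : t ≤ x₂) (hK₁ : volume (Prod.mk x₁ ⁻¹' K) ≠ 0) (hK₂ : volume (Prod.mk x₂ ⁻¹' K) ≠ 0) :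
    volume (Prod.mk t ⁻¹' K) ≠ 0 := by
  rcases h₁.eq_or_lt with rfl | h₁
  · exact hK₁
  obtain ⟨y₁, hy₁⟩ := nonempty_of_measure_ne_zero hK₁
  have hr₀ : 0 < (t - x₁) / (x₂ - x₁) := div_pos (sub_pos.2 h₁) (by linarith)
  have hr₁ : (t - x₁) / (x₂ - x₁) ≤ 1 := (div_le_one (by linarith)).2 (by linarith)
  have ht : AffineMap.lineMap x₁ x₂ ((t - x₁) / (x₂ - x₁)) = t := by
    rw [AffineMap.lineMap_apply_ring', div_mul_cancel₀ _ (by linarith), sub_add_cancel]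
  intro h
  have := measure_mono_null (image_homothety_slice_subset hK hy₁ hr₀.le hr₁) (ht ▸ h)
  rw [Measure.addHaar_image_homothety, mul_eq_zero, ENNReal.ofReal_eq_zero] at this
  exact this.elim (fun h' => (abs_pos.2 (pow_pos hr₀ _).ne').not_ge h') hK₂

theorem volume_slice_zero_ne_zero_of_centroid (hKc : IsCompact K) (hKconv : Convex ℝ K)
    (hK₀ : volume K ≠ 0) (hcentroid : ∫ p in K, p = 0) : volume (Prod.mk 0 ⁻¹' K) ≠ 0 := by
  obtain ⟨hneg, hpos⟩ := volume_inter_fst_nonpos_ne_zero_and_nonneg hKc hK₀ hcentroid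
  have hKm : MeasurableSet K := hKc.isClosed.measurableSet
  obtain ⟨x₁, hx₁, hK₁⟩ := exists_mem_volume_slice_ne_zero hKm measurableSet_Iic hneg
  obtain ⟨x₂, hx₂, hK₂⟩ := exists_mem_volume_slice_ne_zero hKm measurableSet_Ici hpos
  exact volume_slice_ne_zero_of_convex hKconv hx₁ hx₂ hK₁ hK₂

end ConvexBody

theorem integral_cone_to_apex {n : ℕ} (hn : 0 < n) (γ β u : ℝ) (hβ : β ≠ 0) :
    ∫ x in u..β, (γ * (β - x) / β) ^ (n - 1) =
      γ ^ (n - 1) * (β - u) ^ n / (n * β ^ (n - 1)) := by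
  obtain ⟨m, rfl⟩ : ∃ m, n = m + 1 := ⟨n - 1, by omega⟩
  have hprofile : (fun x => (γ * (β - x) / β) ^ m) = fun x => (γ / β) ^ m * (β - x) ^ m := by
    ext
    rw [← mul_pow, div_mul_eq_mul_div]
  rw [Nat.add_sub_cancel, hprofile, intervalIntegral.integral_const_mul,
    intervalIntegral.integral_comp_sub_left (fun x => x ^ m), sub_self, integral_pow,
    zero_pow m.succ_ne_zero, sub_zero, div_pow]
  push_cast
  field_simp

theorem cone_profile_integrals {n : ℕ} (hn : 0 < n) {V₀ Vp γ α β : ℝ} (hV₀ : 0 < V₀)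
    (hVp : 0 < Vp) (hVp₁ : Vp < 1) (hγ : γ ^ (n - 1) = V₀) (hβ : β = n / V₀ * Vp)
    (hα : α = β - (n * β ^ (n - 1) / V₀) ^ (n⁻¹ : ℝ)) :
    α < 0 ∧ ∫ x in α..0, (γ * (β - x) / β) ^ (n - 1) = 1 - Vp ∧
      ∫ x in 0..β, (γ * (β - x) / β) ^ (n - 1) = Vp ∧
      ∫ x in α..β, (γ * (β - x) / β) ^ (n - 1) = 1 := by
  have hβ₀ : 0 < β := hβ ▸ by positivity
  have hβn : β ^ n = β ^ (n - 1) * β := by rw [← pow_succ, Nat.sub_add_cancel hn]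
  have hβα : (β - α) ^ n = n * β ^ (n - 1) / V₀ := by
    rw [hα, sub_sub_cancel, Real.rpow_inv_natCast_pow (by positivity) hn.ne']
  have hapex (u : ℝ) : ∫ x in u..β, (γ * (β - x) / β) ^ (n - 1) =
      V₀ * (β - u) ^ n / (n * β ^ (n - 1)) := by
    rw [integral_cone_to_apex hn γ β u hβ₀.ne', hγ]
  have hzero : ∫ x in 0..β, (γ * (β - x) / β) ^ (n - 1) = Vp := by
    rw [hapex, sub_zero, hβn, hβ]
    field_simp
  have hbase : ∫ x in α..β, (γ * (β - x) / β) ^ (n - 1) = 1 := by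
    rw [hapex, hβα]
    field_simp
  refine ⟨?_, ?_, hzero, hbase⟩
  · have hβ_lt : β < n / V₀ := by rw [hβ]; nlinarith [div_pos (Nat.cast_pos.2 hn) hV₀]
    have hpow : β ^ n < (β - α) ^ n := calc
      β ^ n = β ^ (n - 1) * β := hβn
      _ < β ^ (n - 1) * (n / V₀) := mul_lt_mul_of_pos_left hβ_lt (pow_pos hβ₀ _)
      _ = (β - α) ^ n := by rw [hβα]; ring
    have := lt_of_pow_lt_pow_left₀ n (hα ▸ sub_sub_cancel β _ ▸ by positivity) hpow
    linarith
  · have hint (u v : ℝ) : IntervalIntegrable (fun x => (γ * (β - x) / β) ^ (n - 1)) volume u v :=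
      (by fun_prop : Continuous fun x => (γ * (β - x) / β) ^ (n - 1)).intervalIntegrable u v
    have := intervalIntegral.integral_add_adjacent_intervals (hint α 0) (hint 0 β)
    linarith

theorem properties_of_c_general (n : ℕ) (hn : 2 ≤ n)
    (K : Set (ℝ × EuclideanSpace ℝ (Fin (n - 1))))
    (hKcomp : IsCompact K) (hKconv : Convex ℝ K)
    -- (H1): the centroid of K is the origin
    (hH1 : (∫ p in K, p) = 0)
    -- (H3): max_x |K_x| = 1
    (hH3le : ∀ x : ℝ, volume {y : EuclideanSpace ℝ (Fin (n - 1)) | (x, y) ∈ K} ≤ 1)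
    -- (H4): |K| = 1
    (hH4 : volume K = 1)
    (g : ℝ → ℝ)
    (hg : ∀ x, g x = (volume {y : EuclideanSpace ℝ (Fin (n - 1)) | (x, y) ∈ K}).toReal
              ^ (((n:ℝ) - 1)⁻¹))
    (a' b' : ℝ)
    (hb' : b' = ((n:ℝ) / (volume {y : EuclideanSpace ℝ (Fin (n - 1)) | ((0:ℝ), y) ∈ K}).toReal)
            * (volume (K ∩ {p : ℝ × EuclideanSpace ℝ (Fin (n - 1)) | 0 ≤ p.1})).toReal)
    (ha' : a' = b' - (((n:ℝ) * b' ^ (n - 1))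
            / (volume {y : EuclideanSpace ℝ (Fin (n - 1)) | ((0:ℝ), y) ∈ K}).toReal)
              ^ ((n:ℝ)⁻¹))
    (c : ℝ → ℝ)
    (hc : ∀ x ∈ Icc a' b', c x = g 0 * (b' - x) / b') :
    a' < 0 ∧
    c 0 = g 0 ∧
    (∫ x in a'..0, c x ^ (n - 1)) =
      (volume (K ∩ {p : ℝ × EuclideanSpace ℝ (Fin (n - 1)) | p.1 ≤ 0})).toReal ∧
    (∫ x in (0:ℝ)..b', c x ^ (n - 1)) =
      (volume (K ∩ {p : ℝ × EuclideanSpace ℝ (Fin (n - 1)) | 0 ≤ p.1})).toReal ∧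
    (∫ x in a'..b', c x ^ (n - 1)) = 1 := by
  have hK : volume K ≠ 0 := by simp [hH4]
  obtain ⟨hneg, hpos⟩ := volume_inter_fst_nonpos_ne_zero_and_nonneg hKcomp hK hH1
  have hfin (s : Set (ℝ × EuclideanSpace ℝ (Fin (n - 1)))) : volume (K ∩ s) ≠ ⊤ :=
    measure_ne_top_of_subset inter_subset_left (by simp [hH4])
  have hVsum : (volume (K ∩ {p | 0 ≤ p.1})).toReal + (volume (K ∩ {p | p.1 ≤ 0})).toReal = 1 := by
    rw [← ENNReal.toReal_add (hfin _) (hfin _),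
      volume_inter_fst_nonneg_add_nonpos hKcomp.isClosed.measurableSet, hH4, ENNReal.toReal_one]
  have hV₀ := ENNReal.toReal_pos (volume_slice_zero_ne_zero_of_centroid hKcomp hKconv hK hH1)
    (ne_top_of_le_ne_top ENNReal.one_ne_top (hH3le 0))
  have hVp := ENNReal.toReal_pos hpos (hfin _)
  have hVm := ENNReal.toReal_pos hneg (hfin _)
  have hγ : g 0 ^ (n - 1) = (volume (Prod.mk 0 ⁻¹' K)).toReal := by
    rw [hg, ← Nat.cast_pred (by omega), Real.rpow_inv_natCast_pow ENNReal.toReal_nonneg (by omega)]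
    rfl
  obtain ⟨ha'₀, hI₁, hI₂, hI₃⟩ := cone_profile_integrals (by omega) hV₀ hVp (by linarith) hγ hb' ha'
  have hb'₀ : 0 < b' := hb' ▸ mul_pos (div_pos (by positivity) hV₀) hVp
  have hcone {u v : ℝ} (hu : u ∈ Icc a' b') (hv : v ∈ Icc a' b') :
      ∫ x in u..v, c x ^ (n - 1) = ∫ x in u..v, (g 0 * (b' - x) / b') ^ (n - 1) :=
    intervalIntegral.integral_congr fun x hx => by rw [hc x (uIcc_subset_Icc hu hv hx)]
  have ha'_mem : a' ∈ Icc a' b' := left_mem_Icc.2 (by linarith)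
  have hb'_mem : b' ∈ Icc a' b' := right_mem_Icc.2 (by linarith)
  have h0_mem : (0 : ℝ) ∈ Icc a' b' := ⟨ha'₀.le, hb'₀.le⟩
  refine ⟨ha'₀, ?_, ?_, ?_, ?_⟩
  · rw [hc 0 h0_mem, sub_zero, mul_div_cancel_right₀ _ hb'₀.ne']
  · rw [hcone ha'_mem h0_mem, hI₁]
    linarith
  · rw [hcone h0_mem hb'_mem, hI₂]
  · rw [hcone ha'_mem hb'_mem, hI₃]

theorem properties_of_c (n : ℕ) (hn : 2 ≤ n)
    (K : Set (ℝ × EuclideanSpace ℝ (Fin (n - 1))))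
    (hKcomp : IsCompact K) (hKconv : Convex ℝ K)
    -- (H1): the centroid of K is the origin
    (hH1 : (∫ p in K, p) = 0)
    -- (H3): max_x |K_x| = 1
    (hH3le : ∀ x : ℝ, volume {y : EuclideanSpace ℝ (Fin (n - 1)) | (x, y) ∈ K} ≤ 1)
    (hH3eq : ∃ x : ℝ, volume {y : EuclideanSpace ℝ (Fin (n - 1)) | (x, y) ∈ K} = 1)
    -- (H4): |K| = 1
    (hH4 : volume K = 1)
    (a b : ℝ)
    (ha : IsLeast (Prod.fst '' K) a) (hb : IsGreatest (Prod.fst '' K) b)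
    (g : ℝ → ℝ)
    (hg : ∀ x, g x = (volume {y : EuclideanSpace ℝ (Fin (n - 1)) | (x, y) ∈ K}).toReal
              ^ (((n:ℝ) - 1)⁻¹))
    (a' b' : ℝ)
    (hb' : b' = ((n:ℝ) / (volume {y : EuclideanSpace ℝ (Fin (n - 1)) | ((0:ℝ), y) ∈ K}).toReal)
            * (volume (K ∩ {p : ℝ × EuclideanSpace ℝ (Fin (n - 1)) | 0 ≤ p.1})).toReal)
    (ha' : a' = b' - (((n:ℝ) * b' ^ (n - 1))
            / (volume {y : EuclideanSpace ℝ (Fin (n - 1)) | ((0:ℝ), y) ∈ K}).toReal)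
              ^ ((n:ℝ)⁻¹))
    (c : ℝ → ℝ)
    (hc : ∀ x ∈ Icc a' b', c x = g 0 * (b' - x) / b') :
    a' < 0 ∧
    c 0 = g 0 ∧
    (∫ x in a'..0, c x ^ (n - 1)) =
      (volume (K ∩ {p : ℝ × EuclideanSpace ℝ (Fin (n - 1)) | p.1 ≤ 0})).toReal ∧
    (∫ x in (0:ℝ)..b', c x ^ (n - 1)) =
      (volume (K ∩ {p : ℝ × EuclideanSpace ℝ (Fin (n - 1)) | 0 ≤ p.1})).toReal ∧
    (∫ x in a'..b', c x ^ (n - 1)) = 1 :=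
  properties_of_c_general n hn K hKcomp hKconv hH1 hH3le hH4 g hg a' b' hb' ha' c hc
end

section
/- Under hypotheses (H1)–(H4), with d = |K ∩ H⁺|^{1/n} − ((n/(n+1))ⁿ)^{1/n}, one has ∫_{a'}^{b'} x·c(x)^{n−1} dx = (b' − a')·d. -/
/-!
On `[a', b']` the function `c ^ (n - 1)` is `|K₀| ((b' - x) / b') ^ (n - 1)`,
so the integral is an elementary polynomial integral in `L = b' - a'`. The definition of `a'` says
`L ^ n = n b' ^ (n - 1) / |K₀|`, and together with `b' = n |K ∩ H⁺| / |K₀|` this gives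
`b' = L |K ∩ H⁺| ^ (1 / n)`, which turns the result into `L d`.
-/

open MeasureTheory Set

theorem integral_mul_sub_pow (m : ℕ) (p L : ℝ) :
    ∫ x in (p - L)..p, x * (p - x) ^ m = L ^ (m + 1) * (p / (m + 1) - L / (m + 2)) := by
  have h := intervalIntegral.integral_comp_sub_left (fun t => (p - t) * t ^ m)
    (a := p - L) (b := p) p
  simp only [sub_sub_cancel, sub_self] at h
  rw [h]
  simp only [sub_mul, ← pow_succ']
  rw [intervalIntegral.integral_sub ((intervalIntegral.intervalIntegrable_pow m).const_mul p)
    (intervalIntegral.intervalIntegrable_pow (m + 1)), intervalIntegral.integral_const_mul,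
    integral_pow, integral_pow]
  field_simp
  push_cast
  ring

theorem mul_rpow_inv_natCast_eq_of_pow_eq {n : ℕ} (hn : n ≠ 0) {v V b L : ℝ} (hV : 0 ≤ V)
    (hb_nonneg : 0 ≤ b) (hL : 0 ≤ L) (hb : b = n / v * V) (hLn : L ^ n = n * b ^ (n - 1) / v) :
    L * V ^ (n : ℝ)⁻¹ = b := by
  refine (pow_left_inj₀ (by positivity) hb_nonneg hn).mp ?_
  rw [mul_pow, Real.rpow_inv_natCast_pow hV hn]
  calc L ^ n * V = b ^ (n - 1) * (n / v * V) := by rw [hLn]; ring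
    _ = b ^ n := by rw [← hb, pow_sub_one_mul hn]

theorem cone_first_moment_eq {n : ℕ} (hn : 2 ≤ n) {v V b L : ℝ} (hv : 0 ≤ v) (hV : 0 ≤ V)
    (hL : 0 ≤ L) (hb : b = n / v * V) (hLn : L ^ n = n * b ^ (n - 1) / v) :
    v / b ^ (n - 1) * (L ^ n * (b / n - L / (n + 1))) = L * (V ^ (n : ℝ)⁻¹ - n / (n + 1)) := by
  have hn₀ : n ≠ 0 := by omega
  have hb_nonneg : 0 ≤ b := hb ▸ by positivity
  rcases hb_nonneg.eq_or_lt with hb₀ | hb₀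
  · have hL₀ : L = 0 := by
      rwa [← hb₀, zero_pow (by omega), mul_zero, zero_div, pow_eq_zero_iff hn₀] at hLn
    simp [hL₀, ← hb₀, show n - 1 ≠ 0 by omega]
  have hv₀ : v ≠ 0 := by
    rintro rfl
    rw [div_zero, zero_mul] at hb
    exact hb₀.ne' hb
  rw [hLn, mul_sub L, mul_rpow_inv_natCast_eq_of_pow_eq hn₀ hV hb_nonneg hL hb hLn]
  field_simp

theorem integral_x_c_pow_general (n : ℕ) (hn : 2 ≤ n)
    (K : Set (ℝ × EuclideanSpace ℝ (Fin (n - 1))))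
    (g : ℝ → ℝ)
    (hg : ∀ x, g x = (volume {y : EuclideanSpace ℝ (Fin (n - 1)) | (x, y) ∈ K}).toReal
              ^ (((n:ℝ) - 1)⁻¹))
    (a' b' : ℝ)
    (hb' : b' = ((n:ℝ) / (volume {y : EuclideanSpace ℝ (Fin (n - 1)) | ((0:ℝ), y) ∈ K}).toReal)
            * (volume (K ∩ {p : ℝ × EuclideanSpace ℝ (Fin (n - 1)) | 0 ≤ p.1})).toReal)
    (ha' : a' = b' - (((n:ℝ) * b' ^ (n - 1))
            / (volume {y : EuclideanSpace ℝ (Fin (n - 1)) | ((0:ℝ), y) ∈ K}).toReal)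
              ^ ((n:ℝ)⁻¹))
    (d : ℝ)
    (hd : d = (volume (K ∩ {p : ℝ × EuclideanSpace ℝ (Fin (n - 1)) | 0 ≤ p.1})).toReal ^ ((n:ℝ)⁻¹)
            - (((n:ℝ) / (n + 1)) ^ n) ^ ((n:ℝ)⁻¹))
    (c : ℝ → ℝ)
    (hc : ∀ x ∈ Icc a' b', c x = g 0 * (b' - x) / b') :
    (∫ x in a'..b', x * c x ^ (n - 1)) = (b' - a') * d := by
  set v₀ := (volume {y : EuclideanSpace ℝ (Fin (n - 1)) | ((0:ℝ), y) ∈ K}).toReal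
  set V := (volume (K ∩ {p : ℝ × EuclideanSpace ℝ (Fin (n - 1)) | 0 ≤ p.1})).toReal
  have hv₀ : 0 ≤ v₀ := ENNReal.toReal_nonneg
  have hV : 0 ≤ V := ENNReal.toReal_nonneg
  have hb'_nonneg : 0 ≤ b' := hb' ▸ by positivity
  have hn₁ : ((n - 1 : ℕ) : ℝ) = n - 1 := by push_cast [Nat.cast_sub (by omega : 1 ≤ n)]; ring
  have hL : b' - a' = (n * b' ^ (n - 1) / v₀) ^ (n : ℝ)⁻¹ := by rw [ha', sub_sub_cancel]
  have hL_nonneg : 0 ≤ b' - a' := by rw [hL]; positivity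
  have hLn : (b' - a') ^ n = n * b' ^ (n - 1) / v₀ := by
    rw [hL]
    exact Real.rpow_inv_natCast_pow (by positivity) (by omega)
  have hg₀ : g 0 ^ (n - 1) = v₀ := by
    rw [hg, ← hn₁]
    exact Real.rpow_inv_natCast_pow hv₀ (by omega)
  have hc_pow : ∫ x in a'..b', x * c x ^ (n - 1)
      = (g 0 / b') ^ (n - 1) * ∫ x in (b' - (b' - a'))..b', x * (b' - x) ^ (n - 1) := by
    rw [← intervalIntegral.integral_const_mul, sub_sub_cancel]
    refine intervalIntegral.integral_congr fun x hx => ?_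
    rw [uIcc_of_le (by linarith)] at hx
    rw [hc x hx, mul_div_right_comm, mul_pow]
    ring
  rw [hc_pow, integral_mul_sub_pow, Nat.sub_add_cancel (by omega), hn₁, sub_add_cancel,
    show (n : ℝ) - 1 + 2 = n + 1 by ring, div_pow, hg₀, hd,
    Real.pow_rpow_inv_natCast (by positivity) (by omega)]
  exact cone_first_moment_eq hn hv₀ hV hL_nonneg hb' hLn

theorem integral_x_c_pow (n : ℕ) (hn : 2 ≤ n)
    (K : Set (ℝ × EuclideanSpace ℝ (Fin (n - 1))))
    (hKcomp : IsCompact K) (hKconv : Convex ℝ K)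
    -- (H1): the centroid of K is the origin
    (hH1 : (∫ p in K, p) = 0)
    -- (H3): max_x |K_x| = 1
    (hH3le : ∀ x : ℝ, volume {y : EuclideanSpace ℝ (Fin (n - 1)) | (x, y) ∈ K} ≤ 1)
    (hH3eq : ∃ x : ℝ, volume {y : EuclideanSpace ℝ (Fin (n - 1)) | (x, y) ∈ K} = 1)
    -- (H4): |K| = 1
    (hH4 : volume K = 1)
    (a b : ℝ)
    (ha : IsLeast (Prod.fst '' K) a) (hb : IsGreatest (Prod.fst '' K) b)
    (g : ℝ → ℝ)
    (hg : ∀ x, g x = (volume {y : EuclideanSpace ℝ (Fin (n - 1)) | (x, y) ∈ K}).toReal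
              ^ (((n:ℝ) - 1)⁻¹))
    (a' b' : ℝ)
    (hb' : b' = ((n:ℝ) / (volume {y : EuclideanSpace ℝ (Fin (n - 1)) | ((0:ℝ), y) ∈ K}).toReal)
            * (volume (K ∩ {p : ℝ × EuclideanSpace ℝ (Fin (n - 1)) | 0 ≤ p.1})).toReal)
    (ha' : a' = b' - (((n:ℝ) * b' ^ (n - 1))
            / (volume {y : EuclideanSpace ℝ (Fin (n - 1)) | ((0:ℝ), y) ∈ K}).toReal)
              ^ ((n:ℝ)⁻¹))
    (d : ℝ)
    (hd : d = (volume (K ∩ {p : ℝ × EuclideanSpace ℝ (Fin (n - 1)) | 0 ≤ p.1})).toReal ^ ((n:ℝ)⁻¹)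
            - (((n:ℝ) / (n + 1)) ^ n) ^ ((n:ℝ)⁻¹))
    (c : ℝ → ℝ)
    (hc : ∀ x ∈ Icc a' b', c x = g 0 * (b' - x) / b') :
    (∫ x in a'..b', x * c x ^ (n - 1)) = (b' - a') * d :=
  integral_x_c_pow_general n hn K g hg a' b' hb' ha' d hd c hc
end

section
/- Under hypotheses (H1)–(H4), one has |K Δ C| = ∫_ℝ |g(x)^{n−1} − s(x)^{n−1}| dx, where Δ denotes symmetric difference and g, s are extended by 0 outside their original domains. -/
/-!
Write `S = (b, β)` and `K₀ = {y | (0, y) ∈ K}`. The base of `C` is the image of `{0} × K₀` under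
the homothety of centre `S` and ratio `(b - a') / b`, so every point of `C` is
`S + c • ((0, y) - S)` for some `(0, y) ∈ K`. Hence the slices of `K` and `C` are nested at every
abscissa `x`: for `0 ≤ x ≤ b` the coefficient `c` lies in `[0, 1]` and convexity puts the point in
`K`; for `a' ≤ x ≤ 0` the ray from `S` through a point of `K_x` meets `{x₁ = 0}` inside `K`, which
exhibits the point as one of `C`; otherwise one of the two slices is empty. Nested slices satisfy
`|K_x Δ C_x| = | |K_x| - |C_x| |`, and Fubini gives the formula. The centroid `0` lies in `K` and
`K` is not contained in `{x₁ ≤ 0}`, so `K₀ ≠ ∅` and `b > 0`.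
-/

open MeasureTheory Set AffineMap

/-- The cone with apex `S` over the base `homothety S r '' Q`. -/
def apexCone {E : Type*} [AddCommGroup E] [Module ℝ E] (S : E) (r : ℝ) (Q : Set E) : Set E :=
  (fun tq : ℝ × E => homothety S (tq.1 * r) tq.2) '' (Icc 0 1 ×ˢ Q)

section Cone

variable {E : Type*} [AddCommGroup E] [Module ℝ E]

theorem convexHull_homothety_image_union_singleton {Q : Set E} (hQ : Convex ℝ Q)
    (hQne : Q.Nonempty) (S : E) (r : ℝ) :
    convexHull ℝ (homothety S r '' Q ∪ {S}) = apexCone S r Q := by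
  rw [union_singleton, convexHull_insert (hQne.image _),
    (hQ.affine_image (homothety S r)).convexHull_eq, convexJoin_singleton_left]
  ext p
  simp only [apexCone, mem_iUnion₂, mem_image, segment_eq_image_lineMap, homothety_mul_apply,
    ← homothety_eq_lineMap, Prod.exists, mem_prod]
  constructor
  · rintro ⟨_, ⟨q, hq, rfl⟩, t, ht, rfl⟩
    exact ⟨t, q, ⟨ht, hq⟩, rfl⟩
  · rintro ⟨t, q, ⟨ht, hq⟩, rfl⟩
    exact ⟨_, ⟨q, hq, rfl⟩, t, ht, rfl⟩

theorem mem_apexCone {S p : E} {r : ℝ} {Q : Set E} :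
    p ∈ apexCone S r Q ↔ ∃ t ∈ Icc (0 : ℝ) 1, ∃ q ∈ Q, homothety S (t * r) q = p := by
  simp [apexCone, and_assoc]

theorem IsCompact.apexCone [TopologicalSpace E] [IsTopologicalAddGroup E] [ContinuousSMul ℝ E]
    {Q : Set E} (hQ : IsCompact Q) (S : E) (r : ℝ) : IsCompact (apexCone S r Q) :=
  (isCompact_Icc.prod hQ).image <| by
    simp only [homothety_apply, vsub_eq_sub, vadd_eq_add]
    fun_prop

end Cone

section Slices

variable {V : Type*} [AddCommGroup V] [Module ℝ V] {K : Set (ℝ × V)} {b : ℝ} {β : V}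

@[simp]
theorem fst_homothety (S p : ℝ × V) (c : ℝ) : (homothety S c p).1 = c * (p.1 - S.1) + S.1 := by
  simp [homothety_apply]

theorem Convex.homothety_mem_of_fst_mem_Icc (hK : Convex ℝ K) (hS : (b, β) ∈ K) (hb : 0 < b)
    {y : V} (hy : ((0 : ℝ), y) ∈ K) {c : ℝ} (hc : (homothety (b, β) c (0, y)).1 ∈ Icc 0 b) :
    homothety (b, β) c (0, y) ∈ K := by
  obtain ⟨h0, hb'⟩ := hc
  simp only [fst_homothety] at h0 hb'
  rw [homothety_eq_lineMap]
  exact hK.lineMap_mem hS hy ⟨by nlinarith, by nlinarith⟩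

theorem Convex.exists_eq_homothety_of_fst_nonpos (hK : Convex ℝ K) (hS : (b, β) ∈ K)
    (hb : 0 < b) {p : ℝ × V} (hp : p ∈ K) (hp0 : p.1 ≤ 0) :
    ∃ y, ((0 : ℝ), y) ∈ K ∧ p = homothety (b, β) ((b - p.1) / b) (0, y) := by
  have hbp : 0 < b - p.1 := by linarith
  set q := homothety (b, β) (b / (b - p.1)) p with hq
  have hq0 : q.1 = 0 := by
    rw [hq, fst_homothety]
    field_simp
    ring
  refine ⟨q.2, ?_, ?_⟩
  · rw [← hq0, hq, homothety_eq_lineMap]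
    exact hK.lineMap_mem hS hp ⟨by positivity, (div_le_one hbp).2 (by linarith)⟩
  · have hc : (b - p.1) / b * (b / (b - p.1)) = 1 := by field_simp
    rw [← hq0, hq, ← homothety_mul_apply, hc, homothety_one]
    rfl

theorem singleton_prod_image_eq_homothety_image {a' b : ℝ} (hb : b ≠ 0) (β : V) (A : Set V) :
    ({a'} : Set ℝ) ×ˢ ((fun y => β + ((b - a') / b) • (y - β)) '' A) =
      homothety (b, β) ((b - a') / b) '' ({(0 : ℝ)} ×ˢ A) := by
  simp only [singleton_prod, image_image]
  congr 1
  funext y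
  ext
  · simp [homothety_apply]
    field_simp
    ring
  · simp [homothety_apply, add_comm]

theorem Convex.singleton_zero_prod_slice (hK : Convex ℝ K) :
    Convex ℝ ({(0 : ℝ)} ×ˢ {y | ((0 : ℝ), y) ∈ K}) :=
  (convex_singleton 0).prod (hK.linear_preimage (LinearMap.inr ℝ ℝ V))

theorem IsCompact.singleton_zero_prod_slice [TopologicalSpace V] (hK : IsCompact K) :
    IsCompact ({(0 : ℝ)} ×ˢ {y | ((0 : ℝ), y) ∈ K}) := by
  convert hK.inter_right (isClosed_singleton.preimage continuous_fst :
    IsClosed (Prod.fst ⁻¹' {(0 : ℝ)} : Set (ℝ × V))) using 1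
  ext ⟨x, y⟩
  constructor
  · rintro ⟨rfl, hy⟩
    exact ⟨hy, rfl⟩
  · rintro ⟨hxy, rfl⟩
    exact ⟨rfl, hxy⟩

theorem Convex.slices_nested_apexCone (hK : Convex ℝ K) (hS : (b, β) ∈ K) (hb : 0 < b)
    (hbmax : ∀ p ∈ K, p.1 ≤ b) (a' x : ℝ) :
    let C := apexCone (b, β) ((b - a') / b) ({(0 : ℝ)} ×ˢ {y | ((0 : ℝ), y) ∈ K})
    Prod.mk x ⁻¹' C ⊆ Prod.mk x ⁻¹' K ∨ Prod.mk x ⁻¹' K ⊆ Prod.mk x ⁻¹' C := by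
  intro C
  rcases le_or_gt 0 x with hx0 | hx0
  · rcases le_or_gt x b with hxb | hxb
    · left
      intro y hy
      obtain ⟨t, -, ⟨_, z⟩, ⟨rfl, hz⟩, hxy⟩ := mem_apexCone.1 hy
      rw [mem_preimage, ← hxy]
      exact hK.homothety_mem_of_fst_mem_Icc hS hb hz (hxy ▸ ⟨hx0, hxb⟩)
    · exact Or.inr fun y hy => absurd (hbmax _ hy) (not_le.2 hxb)
  · rcases le_or_gt a' x with hax | hax
    · right
      intro y hy
      obtain ⟨z, hz, hxy⟩ := hK.exists_eq_homothety_of_fst_nonpos hS hb hy hx0.le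
      refine mem_apexCone.2 ⟨(b - x) / (b - a'), ⟨?_, ?_⟩, (0, z), ⟨rfl, hz⟩, ?_⟩
      · exact div_nonneg (by linarith) (by linarith)
      · exact (div_le_one (by linarith)).2 (by linarith)
      · have hc : (b - x) / (b - a') * ((b - a') / b) = (b - x) / b := by
          field_simp [show b - a' ≠ 0 by linarith]
        rw [hc]
        exact hxy.symm
    · left
      intro y hy
      obtain ⟨t, ⟨ht0, ht1⟩, ⟨_, z⟩, ⟨rfl, -⟩, hxy⟩ := mem_apexCone.1 hy
      have hfst := congrArg Prod.fst hxy
      simp only [fst_homothety] at hfst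
      have hx : x = (1 - t) * b + t * a' := by
        field_simp at hfst
        nlinarith
      nlinarith [mul_nonneg ht0 (sub_nonneg.2 hax.le),
        mul_nonneg (sub_nonneg.2 ht1) (sub_nonneg.2 (hx0.trans hb).le)]

end Slices

theorem Real.rpow_inv_natCast_sub_one_pow {x : ℝ} (hx : 0 ≤ x) {n : ℕ} (hn : 1 < n) :
    (x ^ (((n : ℝ) - 1)⁻¹)) ^ (n - 1) = x := by
  rw [← Nat.cast_pred (by omega)]
  exact Real.rpow_inv_natCast_pow hx (by omega)

namespace MeasureTheory

theorem toReal_measure_symmDiff_of_subset_or_subset {α : Type*} [MeasurableSpace α]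
    {μ : Measure α} {s t : Set α} (hs : MeasurableSet s) (ht : MeasurableSet t)
    (hsμ : μ s ≠ ⊤) (htμ : μ t ≠ ⊤) (h : t ⊆ s ∨ s ⊆ t) :
    (μ (symmDiff s t)).toReal = |(μ s).toReal - (μ t).toReal| := by
  wlog hts : t ⊆ s generalizing s t
  · rw [symmDiff_comm, abs_sub_comm]
    exact this ht hs htμ hsμ h.symm (h.resolve_left hts)
  rw [symmDiff_of_ge hts, measure_sdiff hts ht.nullMeasurableSet htμ,
    ENNReal.toReal_sub_of_le (measure_mono hts) hsμ,
    abs_of_nonneg (sub_nonneg.2 (ENNReal.toReal_mono hsμ (measure_mono hts)))]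

theorem Measure.toReal_prod_symmDiff_eq_integral_of_nested {α β : Type*} [MeasurableSpace α]
    [MeasurableSpace β] {μ : Measure α} {ν : Measure β} [SFinite ν] {s t : Set (α × β)}
    (hs : MeasurableSet s) (ht : MeasurableSet t) (hst : μ.prod ν (symmDiff s t) ≠ ⊤)
    (hsx : ∀ x, ν (Prod.mk x ⁻¹' s) ≠ ⊤) (htx : ∀ x, ν (Prod.mk x ⁻¹' t) ≠ ⊤)
    (hnest : ∀ x, Prod.mk x ⁻¹' t ⊆ Prod.mk x ⁻¹' s ∨ Prod.mk x ⁻¹' s ⊆ Prod.mk x ⁻¹' t) :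
    (μ.prod ν (symmDiff s t)).toReal =
      ∫ x, |(ν (Prod.mk x ⁻¹' s)).toReal - (ν (Prod.mk x ⁻¹' t)).toReal| ∂μ := by
  have hm : MeasurableSet (symmDiff s t) := hs.symmDiff ht
  have hmeas : Measurable fun x => ν (Prod.mk x ⁻¹' symmDiff s t) :=
    measurable_measure_prodMk_left hm
  rw [Measure.prod_apply hm] at hst ⊢
  rw [← integral_toReal hmeas.aemeasurable (ae_lt_top hmeas hst)]
  refine integral_congr_ae (Filter.Eventually.of_forall fun x => ?_)
  exact toReal_measure_symmDiff_of_subset_or_subset (measurable_prodMk_left hs)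
    (measurable_prodMk_left ht) (hsx x) (htx x) (hnest x)

theorem IsCompact.measure_preimage_prodMk_ne_top {α β : Type*} [TopologicalSpace α]
    [TopologicalSpace β] [MeasurableSpace β] {ν : Measure β} [IsFiniteMeasureOnCompacts ν]
    {s : Set (α × β)} (hs : IsCompact s) (x : α) : ν (Prod.mk x ⁻¹' s) ≠ ⊤ :=
  ne_top_of_le_ne_top (hs.image continuous_snd).measure_ne_top
    (measure_mono fun y hy => ⟨(x, y), hy, rfl⟩)

theorem Convex.zero_mem_of_setIntegral_eq_zero {E : Type*} [NormedAddCommGroup E]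
    [NormedSpace ℝ E] [CompleteSpace E] [MeasurableSpace E] [OpensMeasurableSpace E]
    {μ : Measure E} {s : Set E} (hs : Convex ℝ s) (hsc : IsClosed s) (h0 : μ s ≠ 0)
    (hfin : μ s ≠ ⊤) (hint : IntegrableOn id s μ) (h : ∫ x in s, x ∂μ = 0) : (0 : E) ∈ s := by
  have := hs.set_average_mem hsc h0 hfin (ae_restrict_mem hsc.measurableSet) hint
  rwa [setAverage_eq, h, smul_zero] at this

theorem exists_mem_fst_pos_of_setIntegral_fst_eq_zero {E : Type*} [MeasureSpace E]
    [SFinite (volume : Measure E)] {s : Set (ℝ × E)} (hs : MeasurableSet s)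
    (h0 : volume s ≠ 0) (hint : IntegrableOn Prod.fst s) (h : ∫ p in s, p.1 = 0) :
    ∃ p ∈ s, 0 < p.1 := by
  by_contra! hle
  have hae : ∀ᵐ p ∂volume.restrict s, -p.1 = 0 := by
    refine (setIntegral_eq_zero_iff_of_nonneg_ae ?_ hint.neg).1
      (by simp only [Pi.neg_apply, integral_neg, h, neg_zero])
    exact (ae_restrict_mem hs).mono fun p hp => neg_nonneg.2 (hle p hp)
  refine h0 (measure_mono_null_ae (t := {0} ×ˢ univ) ?_ ?_)
  · filter_upwards [(ae_restrict_iff' hs).1 hae] with p hp hps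
    exact ⟨neg_eq_zero.1 (hp hps), mem_univ _⟩
  · rw [Measure.volume_eq_prod, Measure.prod_prod, measure_singleton, zero_mul]

end MeasureTheory

theorem symmDiff_eq_integral_general (n : ℕ) (hn : 2 ≤ n)
    (K : Set (ℝ × EuclideanSpace ℝ (Fin (n - 1))))
    (hKcomp : IsCompact K) (hKconv : Convex ℝ K)
    -- (H1): the centroid of K is the origin
    (hH1 : (∫ p in K, p) = 0)
    -- (H4): |K| = 1
    (hH4 : volume K = 1)
    (b : ℝ)
    (hb : IsGreatest (Prod.fst '' K) b)
    (a' : ℝ)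
    (β : EuclideanSpace ℝ (Fin (n - 1))) (hβ : (b, β) ∈ K)
    (C : Set (ℝ × EuclideanSpace ℝ (Fin (n - 1))))
    (hC : C = convexHull ℝ
      ((({a'} : Set ℝ) ×ˢ
          ((fun y => β + ((b - a') / b) • (y - β)) ''
            {y : EuclideanSpace ℝ (Fin (n - 1)) | ((0:ℝ), y) ∈ K}))
        ∪ {(b, β)}))
    (g : ℝ → ℝ)
    (hg : ∀ x, g x = (volume {y : EuclideanSpace ℝ (Fin (n - 1)) | (x, y) ∈ K}).toReal
              ^ (((n:ℝ) - 1)⁻¹))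
    (s : ℝ → ℝ)
    (hs : ∀ x, s x = (volume {y : EuclideanSpace ℝ (Fin (n - 1)) | (x, y) ∈ C}).toReal
              ^ (((n:ℝ) - 1)⁻¹))
    :
    (volume (symmDiff K C)).toReal = ∫ x, |g x ^ (n - 1) - s x ^ (n - 1)| := by
  have hK0 : volume K ≠ 0 := by simp [hH4]
  have hint : IntegrableOn id K := continuousOn_id.integrableOn_compact hKcomp
  have h0K : (0 : ℝ × _) ∈ K := hKconv.zero_mem_of_setIntegral_eq_zero hKcomp.isClosed hK0
    (by simp [hH4]) hint hH1
  obtain ⟨p, hpK, hp⟩ := exists_mem_fst_pos_of_setIntegral_fst_eq_zero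
    hKcomp.isClosed.measurableSet hK0 hint.fst (by simpa [hH1] using (fst_integral hint).symm)
  have hb0 : 0 < b := hp.trans_le (hb.2 ⟨p, hpK, rfl⟩)
  have hCQ : C = apexCone (b, β) ((b - a') / b)
      ({(0 : ℝ)} ×ˢ {y : EuclideanSpace ℝ (Fin (n - 1)) | ((0 : ℝ), y) ∈ K}) := by
    rw [hC, singleton_prod_image_eq_homothety_image hb0.ne']
    exact convexHull_homothety_image_union_singleton hKconv.singleton_zero_prod_slice
      ((singleton_nonempty 0).prod ⟨0, h0K⟩) _ _
  have hCcomp : IsCompact C := hCQ ▸ hKcomp.singleton_zero_prod_slice.apexCone _ _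
  rw [Measure.volume_eq_prod, Measure.toReal_prod_symmDiff_eq_integral_of_nested
    hKcomp.isClosed.measurableSet hCcomp.isClosed.measurableSet
    ((hKcomp.union hCcomp).measure_ne_top.lt_top.trans_le' (measure_mono symmDiff_subset_union)).ne
    hKcomp.measure_preimage_prodMk_ne_top hCcomp.measure_preimage_prodMk_ne_top
    (fun x => hCQ ▸ hKconv.slices_nested_apexCone hβ hb0 (fun q hq => hb.2 ⟨q, hq, rfl⟩) a' x)]
  simp only [hg, hs, Real.rpow_inv_natCast_sub_one_pow ENNReal.toReal_nonneg hn]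
  rfl

theorem symmDiff_eq_integral (n : ℕ) (hn : 2 ≤ n)
    (K : Set (ℝ × EuclideanSpace ℝ (Fin (n - 1))))
    (hKcomp : IsCompact K) (hKconv : Convex ℝ K)
    -- (H1): the centroid of K is the origin
    (hH1 : (∫ p in K, p) = 0)
    -- (H3): max_x |K_x| = 1
    (hH3le : ∀ x : ℝ, volume {y : EuclideanSpace ℝ (Fin (n - 1)) | (x, y) ∈ K} ≤ 1)
    (hH3eq : ∃ x : ℝ, volume {y : EuclideanSpace ℝ (Fin (n - 1)) | (x, y) ∈ K} = 1)
    -- (H4): |K| = 1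
    (hH4 : volume K = 1)
    (a b : ℝ)
    (ha : IsLeast (Prod.fst '' K) a) (hb : IsGreatest (Prod.fst '' K) b)
    (a' b' : ℝ)
    (hb' : b' = ((n:ℝ) / (volume {y : EuclideanSpace ℝ (Fin (n - 1)) | ((0:ℝ), y) ∈ K}).toReal)
            * (volume (K ∩ {p : ℝ × EuclideanSpace ℝ (Fin (n - 1)) | 0 ≤ p.1})).toReal)
    (ha' : a' = b' - (((n:ℝ) * b' ^ (n - 1))
            / (volume {y : EuclideanSpace ℝ (Fin (n - 1)) | ((0:ℝ), y) ∈ K}).toReal)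
              ^ ((n:ℝ)⁻¹))
    (β : EuclideanSpace ℝ (Fin (n - 1))) (hβ : (b, β) ∈ K)
    (C : Set (ℝ × EuclideanSpace ℝ (Fin (n - 1))))
    (hC : C = convexHull ℝ
      ((({a'} : Set ℝ) ×ˢ
          ((fun y => β + ((b - a') / b) • (y - β)) ''
            {y : EuclideanSpace ℝ (Fin (n - 1)) | ((0:ℝ), y) ∈ K}))
        ∪ {(b, β)}))
    (g : ℝ → ℝ)
    (hg : ∀ x, g x = (volume {y : EuclideanSpace ℝ (Fin (n - 1)) | (x, y) ∈ K}).toReal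
              ^ (((n:ℝ) - 1)⁻¹))
    (s : ℝ → ℝ)
    (hs : ∀ x, s x = (volume {y : EuclideanSpace ℝ (Fin (n - 1)) | (x, y) ∈ C}).toReal
              ^ (((n:ℝ) - 1)⁻¹))
    :
    (volume (symmDiff K C)).toReal = ∫ x, |g x ^ (n - 1) - s x ^ (n - 1)| :=
  symmDiff_eq_integral_general n hn K hKcomp hKconv hH1 hH4 b hb a' β hβ C hC g hg s hs
end

section
/- Under hypotheses (H1)–(H4), one has C ∩ H⁺ ⊆ K ∩ H⁺ and K ∩ ([a',0] × ℝ^{n−1}) ⊆ C ∩ ([a',0] × ℝ^{n−1}). -/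
/-!
Write `S = (b, β)` and `r = (b - a') / b`. The base of `C` is the image of the section
`K ∩ H` under the homothety of centre `S` and ratio `r`, so `C` consists of the points
`S + μ • (z - S)` with `z ∈ K ∩ H` and `0 ≤ μ ≤ r`; the first coordinate of such a point is
`b (1 - μ)`. The centroid condition puts points of `K` strictly on both sides of `H`, so
`b > 0` and `K ∩ H ≠ ∅`; and `|K ∩ H⁺| ≤ 1` gives `b' ≤ n / |K₀|`, whence `a' ≤ 0`, i.e.
`r ≥ 1`. A point of `C`
in `H⁺` has `μ ≤ 1`, so it lies on the segment `[S, z] ⊆ K`. Conversely, a point `p ∈ K` with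
`a' ≤ p.1 ≤ 0` is `S + μ • (z - S)` where `z` is the point where `[S, p]` crosses `H`, and
`μ = (b - p.1) / b ≤ r`.
-/

open MeasureTheory Set

theorem exists_pos_of_setIntegral_eq_zero {X : Type*} [MeasurableSpace X] {μ : Measure X}
    {s : Set X} {f : X → ℝ} (hs : MeasurableSet s) (hf : IntegrableOn f s μ)
    (h0 : ∫ x in s, f x ∂μ = 0) (hsupp : μ (Function.support f ∩ s) ≠ 0) :
    ∃ x ∈ s, 0 < f x := by
  by_contra! hle
  have hnonneg : 0 ≤ᵐ[μ.restrict s] -f :=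
    ae_restrict_of_forall_mem hs fun x hx => neg_nonneg.2 (hle x hx)
  have hpos := (setIntegral_pos_iff_support_of_nonneg_ae hnonneg hf.neg).2
    (by rwa [Function.support_neg, pos_iff_ne_zero])
  simp [integral_neg, h0] at hpos

theorem volume_setOf_fst_eq {E : Type*} [MeasureSpace E] [SFinite (volume : Measure E)] (x : ℝ) :
    volume {p : ℝ × E | p.1 = x} = 0 := by
  rw [show {p : ℝ × E | p.1 = x} = {x} ×ˢ univ by ext; simp, Measure.volume_eq_prod,
    Measure.prod_prod, Real.volume_singleton, zero_mul]

theorem exists_fst_pos_and_exists_fst_neg_of_centroid_eq_zero {ι : Type*} [Fintype ι]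
    {K : Set (ℝ × EuclideanSpace ℝ ι)} (hK : IsCompact K) (hvol : volume K ≠ 0)
    (hcentroid : ∫ p in K, p = 0) : (∃ p ∈ K, 0 < p.1) ∧ ∃ p ∈ K, p.1 < 0 := by
  have hint : IntegrableOn (fun p : ℝ × EuclideanSpace ℝ ι => p) K :=
    continuous_id.continuousOn.integrableOn_compact hK
  have hfst : ∫ p in K, p.1 = 0 := by rw [← fst_integral hint, hcentroid, Prod.fst_zero]
  have hsupp : volume (Function.support (fun p : ℝ × EuclideanSpace ℝ ι => p.1) ∩ K) ≠ 0 := by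
    rwa [inter_comm, ← sdiff_compl, Function.compl_support,
      measure_sdiff_null (volume_setOf_fst_eq 0)]
  refine ⟨exists_pos_of_setIntegral_eq_zero hK.measurableSet hint.fst hfst hsupp, ?_⟩
  simpa using exists_pos_of_setIntegral_eq_zero hK.measurableSet hint.fst.neg
    (by rw [Pi.neg_def, integral_neg, hfst, neg_zero]) (by rwa [Function.support_neg])

theorem self_le_rpow_inv_mul_pow_pred {n : ℕ} (hn : n ≠ 0) {x M : ℝ} (hx : 0 ≤ x)
    (hxM : x ≤ M) : x ≤ (M * x ^ (n - 1)) ^ (n : ℝ)⁻¹ := by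
  have hM : 0 ≤ M := hx.trans hxM
  rw [Real.le_rpow_inv_iff_of_pos hx (by positivity) (by positivity), Real.rpow_natCast,
    ← Nat.succ_pred_eq_of_ne_zero hn, pow_succ', Nat.pred_eq_sub_one, Nat.succ_sub_one]
  exact mul_le_mul_of_nonneg_right hxM (by positivity)

theorem mem_convexJoin_homothety_image_singleton {E : Type*} [AddCommGroup E] [Module ℝ E]
    {Z : Set E} {S p : E} {r : ℝ} (hr : 0 < r) :
    p ∈ convexJoin ℝ (AffineMap.homothety S r '' Z) {S} ↔
      ∃ z ∈ Z, ∃ μ ∈ Icc 0 r, p = S + μ • (z - S) := by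
  simp only [convexJoin_singleton_right, mem_iUnion₂, exists_prop, exists_exists_and_eq_and,
    segment_symm _ _ S, segment_eq_image', mem_image, AffineMap.homothety_apply, vsub_eq_sub,
    vadd_eq_add, add_sub_cancel_right, smul_smul]
  constructor
  · rintro ⟨z, hz, θ, ⟨hθ0, hθ1⟩, rfl⟩
    exact ⟨z, hz, θ * r, ⟨by positivity, mul_le_of_le_one_left hr.le hθ1⟩, rfl⟩
  · rintro ⟨z, hz, μ, ⟨hμ0, hμr⟩, rfl⟩
    refine ⟨z, hz, μ / r, ⟨by positivity, (div_le_one hr).2 hμr⟩, ?_⟩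
    rw [div_mul_cancel₀ μ hr.ne']

section HalfSpace

variable {V : Type*} [AddCommGroup V] [Module ℝ V] {K : Set (ℝ × V)} {S p z : ℝ × V}

theorem Convex.add_smul_sub_mem_of_fst_nonneg (hK : Convex ℝ K) (hS : S ∈ K) (hz : z ∈ K)
    (hS₁ : 0 < S.1) (hz₁ : z.1 = 0) {μ : ℝ} (hμ : 0 ≤ μ)
    (hp : 0 ≤ (S + μ • (z - S)).1) :
    S + μ • (z - S) ∈ K := by
  simp only [Prod.fst_add, Prod.smul_fst, Prod.fst_sub, hz₁, smul_eq_mul] at hp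
  exact hK.add_smul_sub_mem hS hz ⟨hμ, by nlinarith⟩

theorem Convex.exists_eq_add_smul_sub_of_fst_nonpos (hK : Convex ℝ K) (hS : S ∈ K)
    (hp : p ∈ K) (hS₁ : 0 < S.1) (hp₁ : p.1 ≤ 0) :
    ∃ y : V, ((0 : ℝ), y) ∈ K ∧ p = S + ((S.1 - p.1) / S.1) • (((0 : ℝ), y) - S) := by
  set μ := (S.1 - p.1) / S.1
  have hμ : 1 ≤ μ := (one_le_div hS₁).2 (by linarith)
  -- `z` is the point where the segment `[S, p]` crosses the hyperplane `{x | x.1 = 0}`.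
  set z := S + μ⁻¹ • (p - S)
  have hz₁ : z.1 = 0 := by
    have : S.1 - p.1 ≠ 0 := by linarith
    simp only [z, μ, Prod.fst_add, Prod.smul_fst, Prod.fst_sub, smul_eq_mul]
    field_simp
    ring
  refine ⟨z.2, ?_, ?_⟩
  · rw [← hz₁]
    exact hK.add_smul_sub_mem hS hp ⟨by positivity, inv_le_one_of_one_le₀ hμ⟩
  · rw [← hz₁, Prod.mk.eta, add_sub_cancel_left, smul_smul, mul_inv_cancel₀ (by positivity),
      one_smul, add_sub_cancel]

theorem singleton_prod_image_eq_homothety_image_s17 (K : Set (ℝ × V)) (b r : ℝ) (β : V) :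
    {b - r * b} ×ˢ ((fun y => β + r • (y - β)) '' {y | ((0 : ℝ), y) ∈ K}) =
      AffineMap.homothety (b, β) r '' (K ∩ {p | p.1 = 0}) := by
  ext ⟨x, w⟩
  simp only [mem_prod, mem_singleton_iff, mem_image, mem_ofPred_eq, mem_inter_iff,
    AffineMap.homothety_apply, vsub_eq_sub, vadd_eq_add, Prod.exists, Prod.mk_sub_mk,
    Prod.smul_mk, Prod.mk_add_mk, Prod.mk.injEq, smul_eq_mul]
  constructor
  · rintro ⟨rfl, y, hy, rfl⟩
    exact ⟨0, y, ⟨hy, rfl⟩, by ring, add_comm _ _⟩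
  · rintro ⟨_, y, ⟨hy, rfl⟩, rfl, rfl⟩
    exact ⟨by ring, y, hy, add_comm _ _⟩

end HalfSpace

theorem cone_containments_general (n : ℕ) (hn : 2 ≤ n)
    (K : Set (ℝ × EuclideanSpace ℝ (Fin (n - 1))))
    (hKcomp : IsCompact K) (hKconv : Convex ℝ K)
    -- (H1): the centroid of K is the origin
    (hH1 : (∫ p in K, p) = 0)
    -- (H4): |K| = 1
    (hH4 : volume K = 1)
    (b : ℝ)
    (hb : IsGreatest (Prod.fst '' K) b)
    (a' b' : ℝ)
    (hb' : b' = ((n:ℝ) / (volume {y : EuclideanSpace ℝ (Fin (n - 1)) | ((0:ℝ), y) ∈ K}).toReal)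
            * (volume (K ∩ {p : ℝ × EuclideanSpace ℝ (Fin (n - 1)) | 0 ≤ p.1})).toReal)
    (ha' : a' = b' - (((n:ℝ) * b' ^ (n - 1))
            / (volume {y : EuclideanSpace ℝ (Fin (n - 1)) | ((0:ℝ), y) ∈ K}).toReal)
              ^ ((n:ℝ)⁻¹))
    (β : EuclideanSpace ℝ (Fin (n - 1))) (hβ : (b, β) ∈ K)
    (C : Set (ℝ × EuclideanSpace ℝ (Fin (n - 1))))
    (hC : C = convexHull ℝ
      ((({a'} : Set ℝ) ×ˢ
          ((fun y => β + ((b - a') / b) • (y - β)) ''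
            {y : EuclideanSpace ℝ (Fin (n - 1)) | ((0:ℝ), y) ∈ K}))
        ∪ {(b, β)}))
    :
    C ∩ {p : ℝ × EuclideanSpace ℝ (Fin (n - 1)) | 0 ≤ p.1}
      ⊆ K ∩ {p : ℝ × EuclideanSpace ℝ (Fin (n - 1)) | 0 ≤ p.1} ∧
    K ∩ {p : ℝ × EuclideanSpace ℝ (Fin (n - 1)) | p.1 ∈ Icc a' 0}
      ⊆ C ∩ {p : ℝ × EuclideanSpace ℝ (Fin (n - 1)) | p.1 ∈ Icc a' 0} := by
  obtain ⟨⟨qr, hqrK, hqr⟩, ql, hqlK, hql⟩ :=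
    exists_fst_pos_and_exists_fst_neg_of_centroid_eq_zero hKcomp (by simp [hH4]) hH1
  have hb₀ : 0 < b := hqr.trans_le (hb.2 ⟨qr, hqrK, rfl⟩)
  have ha'₀ : a' ≤ 0 := by
    have hm : (volume (K ∩ {p : ℝ × EuclideanSpace ℝ (Fin (n - 1)) | 0 ≤ p.1})).toReal ≤ 1 :=
      ENNReal.toReal_le_of_le_ofReal zero_le_one
        (by rw [ENNReal.ofReal_one, ← hH4]; exact measure_mono inter_subset_left)
    have hb'M := hb' ▸ mul_le_of_le_one_right (by positivity) hm
    have := self_le_rpow_inv_mul_pow_pred (n := n) (by omega) (hb' ▸ by positivity) hb'M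
    rw [div_mul_eq_mul_div] at this
    linarith
  set r := (b - a') / b
  have hr : 1 ≤ r := (one_le_div hb₀).2 (by linarith)
  have hbase : b - r * b = a' := by rw [div_mul_cancel₀ _ hb₀.ne']; ring
  obtain ⟨y₀, hy₀, -⟩ := hKconv.exists_eq_add_smul_sub_of_fst_nonpos hβ hqlK hb₀ hql.le
  have hCjoin :
      C = convexJoin ℝ (AffineMap.homothety (b, β) r '' (K ∩ {p | p.1 = 0})) {(b, β)} := by
    rw [hC, ← hbase, singleton_prod_image_eq_homothety_image_s17]
    exact Convex.convexHull_union
      ((hKconv.inter (convex_hyperplane (LinearMap.fst ℝ ℝ _).isLinear 0)).affine_image _)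
      (convex_singleton _) ⟨_, (0, y₀), ⟨hy₀, rfl⟩, rfl⟩ (singleton_nonempty _)
  refine ⟨fun p ⟨hpC, hp₁⟩ => ⟨?_, hp₁⟩, fun p ⟨hpK, hp₁⟩ => ⟨?_, hp₁⟩⟩
  · rw [hCjoin, mem_convexJoin_homothety_image_singleton (by linarith)] at hpC
    obtain ⟨z, ⟨hzK, hz₁⟩, μ, ⟨hμ, -⟩, rfl⟩ := hpC
    exact hKconv.add_smul_sub_mem_of_fst_nonneg hβ hzK hb₀ hz₁ hμ hp₁
  · obtain ⟨y, hy, hp⟩ := hKconv.exists_eq_add_smul_sub_of_fst_nonpos hβ hpK hb₀ hp₁.2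
    rw [hCjoin, mem_convexJoin_homothety_image_singleton (by linarith)]
    exact ⟨(0, y), ⟨hy, rfl⟩, _, ⟨div_nonneg (by linarith [hp₁.2]) hb₀.le,
      div_le_div_of_nonneg_right (by linarith [hp₁.1]) hb₀.le⟩, hp⟩

theorem cone_containments (n : ℕ) (hn : 2 ≤ n)
    (K : Set (ℝ × EuclideanSpace ℝ (Fin (n - 1))))
    (hKcomp : IsCompact K) (hKconv : Convex ℝ K)
    -- (H1): the centroid of K is the origin
    (hH1 : (∫ p in K, p) = 0)
    -- (H3): max_x |K_x| = 1
    (hH3le : ∀ x : ℝ, volume {y : EuclideanSpace ℝ (Fin (n - 1)) | (x, y) ∈ K} ≤ 1)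
    (hH3eq : ∃ x : ℝ, volume {y : EuclideanSpace ℝ (Fin (n - 1)) | (x, y) ∈ K} = 1)
    -- (H4): |K| = 1
    (hH4 : volume K = 1)
    (a b : ℝ)
    (ha : IsLeast (Prod.fst '' K) a) (hb : IsGreatest (Prod.fst '' K) b)
    (a' b' : ℝ)
    (hb' : b' = ((n:ℝ) / (volume {y : EuclideanSpace ℝ (Fin (n - 1)) | ((0:ℝ), y) ∈ K}).toReal)
            * (volume (K ∩ {p : ℝ × EuclideanSpace ℝ (Fin (n - 1)) | 0 ≤ p.1})).toReal)
    (ha' : a' = b' - (((n:ℝ) * b' ^ (n - 1))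
            / (volume {y : EuclideanSpace ℝ (Fin (n - 1)) | ((0:ℝ), y) ∈ K}).toReal)
              ^ ((n:ℝ)⁻¹))
    (β : EuclideanSpace ℝ (Fin (n - 1))) (hβ : (b, β) ∈ K)
    (C : Set (ℝ × EuclideanSpace ℝ (Fin (n - 1))))
    (hC : C = convexHull ℝ
      ((({a'} : Set ℝ) ×ˢ
          ((fun y => β + ((b - a') / b) • (y - β)) ''
            {y : EuclideanSpace ℝ (Fin (n - 1)) | ((0:ℝ), y) ∈ K}))
        ∪ {(b, β)}))
    :
    C ∩ {p : ℝ × EuclideanSpace ℝ (Fin (n - 1)) | 0 ≤ p.1}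
      ⊆ K ∩ {p : ℝ × EuclideanSpace ℝ (Fin (n - 1)) | 0 ≤ p.1} ∧
    K ∩ {p : ℝ × EuclideanSpace ℝ (Fin (n - 1)) | p.1 ∈ Icc a' 0}
      ⊆ C ∩ {p : ℝ × EuclideanSpace ℝ (Fin (n - 1)) | p.1 ∈ Icc a' 0} :=
  cone_containments_general n hn K hKcomp hKconv hH1 hH4 b hb a' b' hb' ha' β hβ C hC
end

section
/- Let n ≥ 2, let 𝒞 ⊂ ℝⁿ be a cone of positive Lebesgue measure, and let α ∈ [(n/(n+1))ⁿ, 1 − (n/(n+1))ⁿ]. Then there exist an affine hyperplane Π passing through the centroid of 𝒞 and a closed half-space Π⁺ with boundary Π such that |𝒞 ∩ Π⁺|/|𝒞| = α. -/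
/-!
Write the cone as `conv ({v} ∪ B)` with `B` in the hyperplane `⟪w, ·⟫ = t` and `⟪w, v⟫ < t`.
Cutting it by `⟪w, x⟫ ≤ ⟪w, v⟫ + s (t - ⟪w, v⟫)` leaves its image under the homothety of
ratio `s` about the apex, of volume `sⁿ |𝒞|`; the layer-cake formula then places the centroid
`z` at level `s = n/(n+1)`. So the two half-spaces bounded by the hyperplane through `z`
parallel to the base cut off the fractions `(n/(n+1))ⁿ` and `1 - (n/(n+1))ⁿ`. Since hyperplanes
are null, the fraction cut off by `{x | ⟪u, z⟫ ≤ ⟪u, x⟫}` depends continuously on `u ≠ 0`, and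
`ℝⁿ \ {0}` is connected for `n ≥ 2`: the intermediate value theorem gives every `α` in between.
-/

open MeasureTheory Set

/-- A cone in ℝⁿ: the convex hull of a point (its vertex) and a compact convex
set contained in some affine hyperplane (its base). -/
def IsCone {n : ℕ} (C : Set (EuclideanSpace ℝ (Fin n))) : Prop :=
  ∃ (v : EuclideanSpace ℝ (Fin n)) (B : Set (EuclideanSpace ℝ (Fin n))),
    IsCompact B ∧ Convex ℝ B ∧
    (∃ (w : EuclideanSpace ℝ (Fin n)) (t : ℝ), w ≠ 0 ∧ ∀ y ∈ B, (inner ℝ w y : ℝ) = t) ∧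
    C = convexHull ℝ (insert v B)

open Filter Topology RealInnerProductSpace

theorem convexHull_insert_eq_image {V : Type*} [AddCommGroup V] [Module ℝ V] {v : V}
    {B : Set V} (hB : Convex ℝ B) (hBne : B.Nonempty) :
    convexHull ℝ (insert v B) = (fun p : ℝ × V ↦ (1 - p.1) • v + p.1 • p.2) '' Icc 0 1 ×ˢ B := by
  ext x
  simp only [convexHull_insert hBne, hB.convexHull_eq, convexJoin_singleton_left, mem_iUnion₂,
    segment_eq_image, mem_image, Prod.exists, mem_prod]
  constructor
  · rintro ⟨b, hb, r, hr, rfl⟩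
    exact ⟨r, b, ⟨hr, hb⟩, rfl⟩
  · rintro ⟨r, b, ⟨hr, hb⟩, rfl⟩
    exact ⟨b, hb, r, hr, rfl⟩

theorem integral_eq_of_measureReal_lt_eq {α : Type*} [MeasurableSpace α] {ν : Measure α}
    [IsFiniteMeasure ν] {f : α → ℝ} (hf : Integrable f ν) (hf0 : 0 ≤ᵐ[ν] f) {T : ℝ} (hT : 0 < T)
    (hfT : ∀ᵐ x ∂ν, f x ≤ T) (k : ℕ)
    (htail : ∀ s ∈ Ioo 0 T, ν.real {x | s < f x} = (1 - (s / T) ^ k) * ν.real univ) :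
    ∫ x, f x ∂ν = k / (k + 1) * T * ν.real univ := by
  have htail_zero : ∀ s ∈ Ioi 0 \ Ioc 0 T, ν.real {x | s < f x} = 0 := by
    rintro s ⟨hs0, hsT⟩
    have hTs : T ≤ s := le_of_lt (not_le.1 fun h ↦ hsT ⟨hs0, h⟩)
    rw [measureReal_eq_zero_iff]
    exact measure_mono_null (fun x hx ↦ not_le.2 (hTs.trans_lt hx)) (ae_iff.1 hfT)
  calc ∫ x, f x ∂ν = ∫ s in Ioi 0, ν.real {x | s < f x} := hf.integral_eq_integral_meas_lt hf0
    _ = ∫ s in Ioo 0 T, ν.real {x | s < f x} := by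
      rw [setIntegral_eq_of_subset_of_forall_sdiff_eq_zero measurableSet_Ioi Ioc_subset_Ioi_self
        htail_zero, integral_Ioc_eq_integral_Ioo]
    _ = ∫ s in 0..T, (1 - (s / T) ^ k) * ν.real univ := by
      rw [intervalIntegral.integral_of_le hT.le, integral_Ioc_eq_integral_Ioo]
      exact setIntegral_congr_fun measurableSet_Ioo htail
    _ = k / (k + 1) * T * ν.real univ := by
      simp only [intervalIntegral.integral_mul_const, div_pow]
      rw [intervalIntegral.integral_sub intervalIntegrable_const
          (((continuous_pow k).div_const _).intervalIntegrable _ _),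
        intervalIntegral.integral_div, integral_pow, intervalIntegral.integral_const, smul_eq_mul]
      field_simp
      ring

section Cone

variable {E : Type*} [NormedAddCommGroup E] [InnerProductSpace ℝ E] {v w : E} {B : Set E} {t : ℝ}

theorem inner_mem_Icc_of_mem_convexHull_insert (hwB : ∀ y ∈ B, ⟪w, y⟫ = t) (hvt : ⟪w, v⟫ ≤ t)
    {x : E} (hx : x ∈ convexHull ℝ (insert v B)) : ⟪w, x⟫ ∈ Icc ⟪w, v⟫ t := by
  refine convexHull_min ?_ ((convex_Icc _ _).linear_preimage (innerₛₗ ℝ w)) hx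
  rintro y (rfl | hy)
  · exact ⟨le_rfl, hvt⟩
  · show ⟪w, y⟫ ∈ Icc ⟪w, v⟫ t
    rw [hwB y hy]
    exact ⟨hvt, le_rfl⟩

theorem isCompact_convexHull_insert (hB : IsCompact B) (hBc : Convex ℝ B) (hBne : B.Nonempty) :
    IsCompact (convexHull ℝ (insert v B)) := by
  rw [convexHull_insert_eq_image hBc hBne]
  exact (isCompact_Icc.prod hB).image (by fun_prop)

theorem convexHull_insert_inter_setOf_inner_le (hBc : Convex ℝ B) (hBne : B.Nonempty)
    (hwB : ∀ y ∈ B, ⟪w, y⟫ = t) (hvt : ⟪w, v⟫ < t) {s : ℝ} (hs0 : 0 ≤ s) (hs1 : s ≤ 1) :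
    convexHull ℝ (insert v B) ∩ {x | ⟪w, x⟫ ≤ ⟪w, v⟫ + s * (t - ⟪w, v⟫)} =
      AffineMap.homothety v s '' convexHull ℝ (insert v B) := by
  have hT : 0 < t - ⟪w, v⟫ := sub_pos.2 hvt
  have inner_comb : ∀ r, ∀ b ∈ B, ⟪w, (1 - r) • v + r • b⟫ = ⟪w, v⟫ + r * (t - ⟪w, v⟫) := by
    intro r b hb
    rw [inner_add_right, real_inner_smul_right, real_inner_smul_right, hwB b hb]
    ring
  have homothety_comb : ∀ (r : ℝ) (b : E),
      AffineMap.homothety v s ((1 - r) • v + r • b) = (1 - s * r) • v + (s * r) • b := by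
    intro r b
    rw [AffineMap.homothety_apply, vsub_eq_sub, vadd_eq_add]
    module
  rw [convexHull_insert_eq_image hBc hBne]
  ext x
  simp only [mem_inter_iff, mem_ofPred_eq, mem_image, Prod.exists, mem_prod]
  constructor
  · rintro ⟨⟨r, b, ⟨⟨hr0, -⟩, hb⟩, rfl⟩, hle⟩
    rw [inner_comb r b hb] at hle
    have hrs : r ≤ s := le_of_mul_le_mul_right (by linarith) hT
    refine ⟨_, ⟨r / s, b, ⟨⟨by positivity, div_le_one_of_le₀ hrs hs0⟩, hb⟩, rfl⟩, ?_⟩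
    rw [homothety_comb, mul_div_cancel_of_imp' fun hs ↦ le_antisymm (hs ▸ hrs) hr0]
  · rintro ⟨_, ⟨r, b, ⟨⟨hr0, hr1⟩, hb⟩, rfl⟩, rfl⟩
    rw [homothety_comb]
    refine ⟨⟨s * r, b, ⟨⟨by positivity, by nlinarith⟩, hb⟩, rfl⟩, ?_⟩
    rw [inner_comb _ b hb]
    nlinarith [mul_le_mul_of_nonneg_right (show s * r ≤ s by nlinarith) hT.le]

variable [MeasurableSpace E] [BorelSpace E] [FiniteDimensional ℝ E] (μ : Measure E)
  [μ.IsAddHaarMeasure]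

theorem addHaar_convexHull_insert_inter_setOf_inner_le (hBc : Convex ℝ B) (hBne : B.Nonempty)
    (hwB : ∀ y ∈ B, ⟪w, y⟫ = t) (hvt : ⟪w, v⟫ < t) {s : ℝ} (hs0 : 0 ≤ s) (hs1 : s ≤ 1) :
    μ (convexHull ℝ (insert v B) ∩ {x | ⟪w, x⟫ ≤ ⟪w, v⟫ + s * (t - ⟪w, v⟫)}) =
      ENNReal.ofReal (s ^ Module.finrank ℝ E) * μ (convexHull ℝ (insert v B)) := by
  rw [convexHull_insert_inter_setOf_inner_le hBc hBne hwB hvt hs0 hs1,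
    Measure.addHaar_image_homothety, abs_of_nonneg (by positivity)]

theorem integral_inner_convexHull_insert (hB : IsCompact B) (hBc : Convex ℝ B)
    (hBne : B.Nonempty) (hwB : ∀ y ∈ B, ⟪w, y⟫ = t) (hvt : ⟪w, v⟫ < t) :
    ∫ x in convexHull ℝ (insert v B), ⟪w, x⟫ ∂μ =
      μ.real (convexHull ℝ (insert v B)) * (⟪w, v⟫ +
        Module.finrank ℝ E / (Module.finrank ℝ E + 1) * (t - ⟪w, v⟫)) := by
  have hT : 0 < t - ⟪w, v⟫ := sub_pos.2 hvt
  have hCc : IsCompact (convexHull ℝ (insert v B)) := isCompact_convexHull_insert hB hBc hBne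
  have := isFiniteMeasure_restrict.2 (hCc.measure_lt_top (μ := μ)).ne
  have hmem : ∀ᵐ x ∂μ.restrict (convexHull ℝ (insert v B)), ⟪w, x⟫ ∈ Icc ⟪w, v⟫ t :=
    (ae_restrict_mem hCc.measurableSet).mono fun x hx ↦
      inner_mem_Icc_of_mem_convexHull_insert hwB hvt.le hx
  have hint : Integrable (fun x ↦ ⟪w, x⟫) (μ.restrict (convexHull ℝ (insert v B))) :=
    (continuous_const.inner continuous_id).continuousOn.integrableOn_compact hCc
  have htail : ∀ s ∈ Ioo 0 (t - ⟪w, v⟫),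
      (μ.restrict (convexHull ℝ (insert v B))).real {x | s < ⟪w, x⟫ - ⟪w, v⟫} =
        (1 - (s / (t - ⟪w, v⟫)) ^ Module.finrank ℝ E) *
          (μ.restrict (convexHull ℝ (insert v B))).real univ := by
    rintro s ⟨hs0, hsT⟩
    have hH : MeasurableSet {x | ⟪w, x⟫ ≤ ⟪w, v⟫ + s / (t - ⟪w, v⟫) * (t - ⟪w, v⟫)} :=
      measurableSet_le (by fun_prop) measurable_const
    have hcompl : {x | s < ⟪w, x⟫ - ⟪w, v⟫} =
        {x | ⟪w, x⟫ ≤ ⟪w, v⟫ + s / (t - ⟪w, v⟫) * (t - ⟪w, v⟫)}ᶜ := by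
      ext x
      simp only [div_mul_cancel₀ _ hT.ne', mem_compl_iff, mem_ofPred_eq, not_le]
      constructor <;> intro <;> linarith
    rw [hcompl, measureReal_compl hH, measureReal_restrict_apply hH, inter_comm,
      measureReal_restrict_apply_univ, measureReal_def, measureReal_def,
      addHaar_convexHull_insert_inter_setOf_inner_le μ hBc hBne hwB hvt (div_pos hs0 hT).le
        ((div_le_one hT).2 hsT.le), ENNReal.toReal_mul, ENNReal.toReal_ofReal (by positivity),
      ← measureReal_def]
    ring
  have key := integral_eq_of_measureReal_lt_eq (hint.sub (integrable_const ⟪w, v⟫))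
    (hmem.mono fun x hx ↦ sub_nonneg.2 hx.1) hT
    (hmem.mono fun x hx ↦ sub_le_sub_right hx.2 ⟪w, v⟫) _ htail
  rw [Pi.sub_def, integral_sub hint (integrable_const _), integral_const, smul_eq_mul,
    measureReal_restrict_apply_univ] at key
  linear_combination key

theorem inner_centroid_convexHull_insert (hB : IsCompact B) (hBc : Convex ℝ B)
    (hBne : B.Nonempty) (hwB : ∀ y ∈ B, ⟪w, y⟫ = t) (hvt : ⟪w, v⟫ < t)
    (hC : μ (convexHull ℝ (insert v B)) ≠ 0) :
    ⟪w, (μ.real (convexHull ℝ (insert v B)))⁻¹ • ∫ x in convexHull ℝ (insert v B), x ∂μ⟫ =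
      ⟪w, v⟫ + Module.finrank ℝ E / (Module.finrank ℝ E + 1) * (t - ⟪w, v⟫) := by
  have hCc := isCompact_convexHull_insert (v := v) hB hBc hBne
  have hV : μ.real (convexHull ℝ (insert v B)) ≠ 0 :=
    ENNReal.toReal_ne_zero.2 ⟨hC, hCc.measure_lt_top.ne⟩
  rw [real_inner_smul_right,
    ← integral_inner (continuous_id.continuousOn.integrableOn_compact (f := fun x ↦ x) hCc),
    integral_inner_convexHull_insert μ hB hBc hBne hwB hvt, inv_mul_cancel_left₀ hV]

theorem measureReal_convexHull_insert_inter_setOf_inner_le_inner_centroid (hB : IsCompact B)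
    (hBc : Convex ℝ B) (hBne : B.Nonempty) (hwB : ∀ y ∈ B, ⟪w, y⟫ = t) (hvt : ⟪w, v⟫ < t)
    (hC : μ (convexHull ℝ (insert v B)) ≠ 0) :
    μ.real (convexHull ℝ (insert v B) ∩ {x | ⟪w, x⟫ ≤
        ⟪w, (μ.real (convexHull ℝ (insert v B)))⁻¹ • ∫ x in convexHull ℝ (insert v B), x ∂μ⟫}) =
      (Module.finrank ℝ E / (Module.finrank ℝ E + 1) : ℝ) ^ Module.finrank ℝ E *
        μ.real (convexHull ℝ (insert v B)) := by
  have hs : (0 : ℝ) ≤ Module.finrank ℝ E / (Module.finrank ℝ E + 1) := by positivity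
  have hs1 : (Module.finrank ℝ E / (Module.finrank ℝ E + 1) : ℝ) ≤ 1 :=
    (div_le_one (by positivity)).2 (by linarith)
  rw [inner_centroid_convexHull_insert μ hB hBc hBne hwB hvt hC, measureReal_def,
    addHaar_convexHull_insert_inter_setOf_inner_le μ hBc hBne hwB hvt hs hs1, ENNReal.toReal_mul,
    ENNReal.toReal_ofReal (by positivity), ← measureReal_def]

end Cone

section Halfspace

variable {E : Type*} [NormedAddCommGroup E] [InnerProductSpace ℝ E] [MeasurableSpace E]
  [BorelSpace E] [FiniteDimensional ℝ E] (μ : Measure E) [μ.IsAddHaarMeasure]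

theorem addHaar_setOf_inner_eq {u : E} (hu : u ≠ 0) (c : ℝ) : μ {x | ⟪u, x⟫ = c} = 0 := by
  obtain ⟨x₀, hx₀⟩ : ∃ x₀ : E, ⟪u, x₀⟫ = c := ⟨(c / ‖u‖ ^ 2) • u, by
    rw [real_inner_smul_right, real_inner_self_eq_norm_sq]
    field_simp [norm_ne_zero_iff.2 hu]⟩
  have hset : {x | ⟪u, x⟫ = c} = (AffineSubspace.mk' x₀ (LinearMap.ker (innerₛₗ ℝ u)) : Set E) := by
    ext x
    simp [AffineSubspace.mem_mk', inner_sub_right, hx₀, sub_eq_zero]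
  rw [hset]
  refine Measure.addHaar_affineSubspace μ _ fun h ↦ hu ?_
  have : u ∈ LinearMap.ker (innerₛₗ ℝ u) := by
    rw [← AffineSubspace.direction_mk' x₀ (LinearMap.ker _), h, AffineSubspace.direction_top]
    trivial
  simpa using this

theorem measureReal_inter_setOf_inner_le_add_neg {C : Set E} (hC : μ C ≠ ⊤) {u : E} (hu : u ≠ 0)
    (z : E) :
    μ.real (C ∩ {x | ⟪u, z⟫ ≤ ⟪u, x⟫}) + μ.real (C ∩ {x | ⟪-u, z⟫ ≤ ⟪-u, x⟫}) = μ.real C := by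
  have := isFiniteMeasure_restrict.2 hC
  have hH₁ : MeasurableSet {x | ⟪u, z⟫ ≤ ⟪u, x⟫} := measurableSet_le measurable_const (by fun_prop)
  have hH₂ : MeasurableSet {x | ⟪-u, z⟫ ≤ ⟪-u, x⟫} :=
    measurableSet_le measurable_const (by fun_prop)
  have hunion : {x | ⟪u, z⟫ ≤ ⟪u, x⟫} ∪ {x | ⟪-u, z⟫ ≤ ⟪-u, x⟫} = univ := by
    ext x
    simp [inner_neg_left, le_total]
  have hinter : {x | ⟪u, z⟫ ≤ ⟪u, x⟫} ∩ {x | ⟪-u, z⟫ ≤ ⟪-u, x⟫} ⊆ {x | ⟪u, x⟫ = ⟪u, z⟫} :=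
    fun x hx ↦ le_antisymm (by simpa [inner_neg_left] using hx.2) hx.1
  have key := measureReal_union_add_inter (μ := μ.restrict C) (s := {x | ⟪u, z⟫ ≤ ⟪u, x⟫}) hH₂
  have hnull : (μ.restrict C).real ({x | ⟪u, z⟫ ≤ ⟪u, x⟫} ∩ {x | ⟪-u, z⟫ ≤ ⟪-u, x⟫}) = 0 :=
    (measureReal_eq_zero_iff).2 (measure_mono_null hinter
      (Measure.restrict_le_self.absolutelyContinuous (addHaar_setOf_inner_eq μ hu _)))
  rw [hunion, hnull, add_zero, measureReal_restrict_apply hH₁, measureReal_restrict_apply hH₂,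
    measureReal_restrict_apply_univ] at key
  rw [inter_comm, inter_comm C, key]

theorem continuousOn_measureReal_inter_setOf_inner_le {C : Set E} (hC : μ C ≠ ⊤) (z : E) :
    ContinuousOn (fun u ↦ μ.real (C ∩ {x | ⟪u, z⟫ ≤ ⟪u, x⟫})) {0}ᶜ := by
  have := isFiniteMeasure_restrict.2 hC
  have hH : ∀ u : E, MeasurableSet {x | ⟪u, z⟫ ≤ ⟪u, x⟫} := fun u ↦
    measurableSet_le measurable_const (by fun_prop)
  have hrestrict : ∀ u : E, μ.real (C ∩ {x | ⟪u, z⟫ ≤ ⟪u, x⟫}) =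
      ((μ.restrict C) {x | ⟪u, z⟫ ≤ ⟪u, x⟫}).toReal := fun u ↦ by
    rw [Measure.restrict_apply (hH u), inter_comm, measureReal_def]
  intro u₀ hu₀
  have hoff : ∀ᵐ x ∂μ.restrict C, ⟪u₀, x⟫ ≠ ⟪u₀, z⟫ :=
    measure_eq_zero_iff_ae_notMem.1 (Measure.restrict_le_self.absolutelyContinuous
      (addHaar_setOf_inner_eq μ hu₀ _))
  have hlim : ∀ᵐ x ∂μ.restrict C, ∀ᶠ u in 𝓝 u₀,
      x ∈ {x | ⟪u, z⟫ ≤ ⟪u, x⟫} ↔ x ∈ {x | ⟪u₀, z⟫ ≤ ⟪u₀, x⟫} := by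
    filter_upwards [hoff] with x hx
    have hcont : Continuous fun u : E ↦ ⟪u, x⟫ - ⟪u, z⟫ := by fun_prop
    rcases hx.lt_or_gt with h | h
    · filter_upwards [hcont.continuousAt.eventually (gt_mem_nhds (sub_neg.2 h))] with u hu
      exact iff_of_false (fun h' : ⟪u, z⟫ ≤ ⟪u, x⟫ ↦ by linarith)
        (fun h' : ⟪u₀, z⟫ ≤ ⟪u₀, x⟫ ↦ by linarith)
    · filter_upwards [hcont.continuousAt.eventually (lt_mem_nhds (sub_pos.2 h))] with u hu
      exact iff_of_true (show ⟪u, z⟫ ≤ ⟪u, x⟫ by linarith) (show ⟪u₀, z⟫ ≤ ⟪u₀, x⟫ by linarith)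
  simp only [hrestrict]
  exact ContinuousAt.continuousWithinAt <| (ENNReal.tendsto_toReal (measure_ne_top _ _)).comp
    (tendsto_measure_of_ae_tendsto_indicator_of_isFiniteMeasure _ (hH u₀) hH hlim)

end Halfspace

theorem IsCone.exists_inner_apex_lt {n : ℕ} {C : Set (EuclideanSpace ℝ (Fin n))} (hC : IsCone C)
    (hC0 : volume C ≠ 0) :
    ∃ (v w : EuclideanSpace ℝ (Fin n)) (B : Set (EuclideanSpace ℝ (Fin n))) (t : ℝ),
      IsCompact B ∧ Convex ℝ B ∧ B.Nonempty ∧ w ≠ 0 ∧ (∀ y ∈ B, ⟪w, y⟫ = t) ∧ ⟪w, v⟫ < t ∧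
        C = convexHull ℝ (insert v B) := by
  obtain ⟨v, B, hB, hBc, ⟨w, t, hw, hwB⟩, rfl⟩ := hC
  obtain ⟨hBne, hvt⟩ : B.Nonempty ∧ ⟪w, v⟫ ≠ t := by
    by_contra hdeg
    refine hC0 (measure_mono_null (convexHull_min ?_ (convex_hyperplane
      (innerₛₗ ℝ w).isLinear ⟪w, v⟫)) (addHaar_setOf_inner_eq volume hw ⟪w, v⟫))
    rintro y (rfl | hy)
    · rfl
    · exact (hwB y hy).trans (not_not.1 (not_and.1 hdeg ⟨y, hy⟩)).symm
  rcases hvt.lt_or_gt with hlt | hgt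
  · exact ⟨v, w, B, t, hB, hBc, hBne, hw, hwB, hlt, rfl⟩
  · refine ⟨v, -w, B, -t, hB, hBc, hBne, neg_ne_zero.2 hw, fun y hy ↦ ?_, ?_, rfl⟩
    · rw [inner_neg_left, hwB y hy]
    · rwa [inner_neg_left, neg_lt_neg_iff]

/-- For any cone and any `α ∈ [(n/(n+1))ⁿ, 1 - (n/(n+1))ⁿ]` there is a closed
half-space, with boundary hyperplane through the centroid of the cone, that cuts
off exactly a fraction `α` of the volume. -/
theorem cone_halfspace_ratio (n : ℕ) (hn : 2 ≤ n)
    (C : Set (EuclideanSpace ℝ (Fin n))) (hC : IsCone C) (hCpos : 0 < volume C)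
    (α : ℝ) (hα : α ∈ Icc (((n:ℝ) / (n + 1)) ^ n) (1 - ((n:ℝ) / (n + 1)) ^ n)) :
    ∃ (u : EuclideanSpace ℝ (Fin n)) (t : ℝ), u ≠ 0 ∧
      (inner ℝ u ((volume C).toReal⁻¹ • (∫ x in C, x)) : ℝ) = t ∧
      (volume (C ∩ {x | t ≤ (inner ℝ u x : ℝ)})).toReal / (volume C).toReal = α := by
  obtain ⟨v, w, B, t, hB, hBc, hBne, hw, hwB, hvt, rfl⟩ := hC.exists_inner_apex_lt hCpos.ne'
  simp only [← measureReal_def]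
  set z := (volume.real (convexHull ℝ (insert v B)))⁻¹ • ∫ x in convexHull ℝ (insert v B), x
  set g := fun u ↦ volume.real (convexHull ℝ (insert v B) ∩ {x | ⟪u, z⟫ ≤ ⟪u, x⟫}) /
    volume.real (convexHull ℝ (insert v B))
  have hfin : volume (convexHull ℝ (insert v B)) ≠ ⊤ :=
    (isCompact_convexHull_insert hB hBc hBne).measure_lt_top.ne
  have hV : volume.real (convexHull ℝ (insert v B)) ≠ 0 :=
    ENNReal.toReal_ne_zero.2 ⟨hCpos.ne', hfin⟩
  have hg_neg : g (-w) = ((n:ℝ) / (n + 1)) ^ n := by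
    simp only [g, inner_neg_left, neg_le_neg_iff]
    rw [measureReal_convexHull_insert_inter_setOf_inner_le_inner_centroid volume hB hBc hBne hwB
      hvt hCpos.ne', finrank_euclideanSpace_fin, mul_div_assoc, div_self hV, mul_one]
  have hg_pos : g w = 1 - ((n:ℝ) / (n + 1)) ^ n := by
    rw [← hg_neg, eq_sub_iff_add_eq, ← add_div,
      measureReal_inter_setOf_inner_le_add_neg volume hfin hw, div_self hV]
  have hg : ContinuousOn g {0}ᶜ :=
    (continuousOn_measureReal_inter_setOf_inner_le volume hfin z).div_const _
  have hrank : 1 < Module.rank ℝ (EuclideanSpace ℝ (Fin n)) := by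
    rw [← Module.finrank_eq_rank, finrank_euclideanSpace_fin]
    exact_mod_cast hn
  obtain ⟨u, hu, hgu⟩ :=
    (isConnected_compl_singleton_of_one_lt_rank hrank 0).isPreconnected.intermediate_value
      (neg_ne_zero.2 hw) hw hg (show α ∈ Icc (g (-w)) (g w) by rwa [hg_neg, hg_pos])
  exact ⟨u, _, hu, rfl, hgu⟩
end
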